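/- arXiv:2403.09300 — 2 statements merged into one kernel-verified Lean document; each statement's English description precedes it below -/
import Mathlib

section
/- Let G be a DAG with clique number ω(G) ≤ m. A vertex X is removable in G if for every S ⊆ Mb(X;G) with |S| ≤ m−2 the following two conditions hold: (Condition 1) for all distinct Y, Z ∈ Mb(X;G)∖S, the set (Mb(X;G) ∪ {X}) ∖ ({Y,Z} ∪ S) does not d-separate Y and Z in G; and (Condition 2) for all Y ∈ Mb(X;G)∖S, the set Mb(X;G) ∖ ({Y} ∪ S) does not d-separate X and Y in G. Moreover, the set of vertices satisfying these conditions is non-empty. -/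
/-!
Common framework: mixed graphs, paths, colliders, m-separation, MAGs,
removability, Markov boundaries, latent projection, orders.
-/

/-- A mixed graph over a vertex set `verts`, with directed edges `dir` and
bidirected edges `bi`. -/
structure MixedGraph (V : Type*) where
  verts : Set V
  dir : V → V → Prop
  bi : V → V → Prop
  bi_symm : ∀ {a b : V}, bi a b → bi b a
  dir_mem : ∀ {a b : V}, dir a b → a ∈ verts ∧ b ∈ verts
  bi_mem : ∀ {a b : V}, bi a b → a ∈ verts ∧ b ∈ verts

namespace MixedGraph

variable {V : Type*}

/-- Two vertices are neighbors (adjacent) if joined by a directed or bidirected edge. -/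
def adj (G : MixedGraph V) (a b : V) : Prop := G.dir a b ∨ G.dir b a ∨ G.bi a b

/-- `a` is an ancestor of `b` (every vertex is an ancestor of itself). -/
def anc (G : MixedGraph V) (a b : V) : Prop := Relation.ReflTransGen G.dir a b

/-- The set of neighbors of `a`. -/
def neighbors (G : MixedGraph V) (a : V) : Set V := {b | b ≠ a ∧ G.adj a b}

/-- The set of parents of `a`. -/
def parents (G : MixedGraph V) (a : V) : Set V := {b | G.dir b a}

/-- The set of children of `a`. -/
def children (G : MixedGraph V) (a : V) : Set V := {b | G.dir a b}

/-- Co-parents of `a` (in a DAG): non-neighbors sharing a common child with `a`. -/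
def coparents (G : MixedGraph V) (a : V) : Set V :=
  {b | b ≠ a ∧ ¬ G.adj a b ∧ ∃ c, G.dir a c ∧ G.dir b c}

/-- The district of `a`: vertices joined to `a` by a path of bidirected edges
(including `a` itself). -/
def district (G : MixedGraph V) (a : V) : Set V := {b | Relation.ReflTransGen G.bi b a}

/-- `PaP(a) = Pa(a) ∪ Dis(a) ∪ Pa(Dis(a))`. -/
def paP (G : MixedGraph V) (a : V) : Set V :=
  G.parents a ∪ G.district a ∪ ⋃ b ∈ G.district a, G.parents b

/-- The induced subgraph of `G` over `W`. -/
def induce (G : MixedGraph V) (W : Set V) : MixedGraph V where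
  verts := G.verts ∩ W
  dir a b := G.dir a b ∧ a ∈ W ∧ b ∈ W
  bi a b := G.bi a b ∧ a ∈ W ∧ b ∈ W
  bi_symm h := ⟨G.bi_symm h.1, h.2.2, h.2.1⟩
  dir_mem h := ⟨⟨(G.dir_mem h.1).1, h.2.1⟩, (G.dir_mem h.1).2, h.2.2⟩
  bi_mem h := ⟨⟨(G.bi_mem h.1).1, h.2.1⟩, (G.bi_mem h.1).2, h.2.2⟩

end MixedGraph

/-- Possible orientations of an edge along a path: `fwd` is `a → b`,
`bwd` is `a ← b`, `bidir` is `a ↔ b`. -/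
inductive EdgeDir
  | fwd | bwd | bidir

/-- Validity of an orientation mark between consecutive path vertices. -/
def edirValid {V : Type*} (G : MixedGraph V) (a b : V) : EdgeDir → Prop
  | .fwd => G.dir a b
  | .bwd => G.dir b a
  | .bidir => G.bi a b

/-- The edge has an arrowhead at its second (right) endpoint. -/
def headAt2 (e : EdgeDir) : Prop := e = .fwd ∨ e = .bidir

/-- The edge has an arrowhead at its first (left) endpoint. -/
def headAt1 (e : EdgeDir) : Prop := e = .bwd ∨ e = .bidir

/-- A path in a mixed graph `G` from `x` to `y`: a sequence of distinct vertices
`vert 0, …, vert len` together with an oriented edge of `G` between consecutive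
vertices. -/
structure MPath {V : Type*} (G : MixedGraph V) (x y : V) where
  len : ℕ
  len_pos : 0 < len
  vert : ℕ → V
  edir : ℕ → EdgeDir
  first : vert 0 = x
  last : vert len = y
  mem : ∀ i, i ≤ len → vert i ∈ G.verts
  inj : ∀ i j, i ≤ len → j ≤ len → vert i = vert j → i = j
  valid : ∀ i, i < len → edirValid G (vert i) (vert (i + 1)) (edir i)

namespace MPath

variable {V : Type*} {G : MixedGraph V} {x y : V}

/-- The vertex at interior position `i` (where `0 < i < len`) is a collider on the path:
both incident path edges have an arrowhead at it. -/
def collider (p : MPath G x y) (i : ℕ) : Prop :=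
  headAt2 (p.edir (i - 1)) ∧ headAt1 (p.edir i)

/-- The path is blocked by `Z`: some interior vertex is a collider that is not an
ancestor of any vertex of `Z ∪ {x, y}`, or a non-collider belonging to `Z`. -/
def blocked (p : MPath G x y) (Z : Set V) : Prop :=
  ∃ i, 0 < i ∧ i < p.len ∧
    ((p.collider i ∧ ∀ w ∈ Z ∪ ({x, y} : Set V), ¬ G.anc (p.vert i) w) ∨
     (¬ p.collider i ∧ p.vert i ∈ Z))

/-- A collider path: every interior vertex is a collider on the path. -/
def isColliderPath (p : MPath G x y) : Prop :=
  ∀ i, 0 < i → i < p.len → p.collider i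

/-- An inducing path relative to `W2`: every interior non-collider belongs to `W2`,
and every interior collider is an ancestor of `x` or of `y`. -/
def isInducing (p : MPath G x y) (W2 : Set V) : Prop :=
  ∀ i, 0 < i → i < p.len →
    (p.collider i → G.anc (p.vert i) x ∨ G.anc (p.vert i) y) ∧
    (¬ p.collider i → p.vert i ∈ W2)

end MPath

/-- `Z` m-separates `x` and `y` in `G`: every path between `x` and `y` is blocked by `Z`. -/
def mSep {V : Type*} (G : MixedGraph V) (x y : V) (Z : Set V) : Prop :=
  ∀ p : MPath G x y, p.blocked Z

namespace MixedGraph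

variable {V : Type*}

/-- The Markov boundary of `a` in `G`: vertices `b ≠ a` with a collider path to `a`. -/
def mb (G : MixedGraph V) (a : V) : Set V :=
  {b | b ≠ a ∧ ∃ p : MPath G b a, p.isColliderPath}

/-- `G` is a maximal ancestral graph (MAG): no directed cycles, no almost directed
cycles, and every pair of distinct non-neighbor vertices is m-separated by some set. -/
structure IsMAG (G : MixedGraph V) : Prop where
  no_dir_cycle : ∀ a b, G.dir a b → ¬ G.anc b a
  no_almost_dir_cycle : ∀ a b, G.bi a b → ¬ G.anc b a
  maximal : ∀ a ∈ G.verts, ∀ b ∈ G.verts, a ≠ b → ¬ G.adj a b →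
    ∃ Z ⊆ G.verts \ {a, b}, mSep G a b Z

/-- `G` is a DAG: a MAG with no bidirected edges. -/
def IsDAG (G : MixedGraph V) : Prop := G.IsMAG ∧ ∀ a b, ¬ G.bi a b

/-- `x` is removable in `G`: `G` and the induced subgraph `G[verts ∖ {x}]` impose the
same m-separation relations among the vertices of `verts ∖ {x}`. -/
def Removable (G : MixedGraph V) (x : V) : Prop :=
  ∀ y z, y ∈ G.verts → z ∈ G.verts → y ≠ x → z ≠ x → y ≠ z →
    ∀ Z ⊆ G.verts \ {x, y, z},
      (mSep G y z Z ↔ mSep (G.induce (G.verts \ {x})) y z Z)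

/-- There is an inducing path between `a` and `b` in `G` relative to `W2`. -/
def InducingAdj (G : MixedGraph V) (W2 : Set V) (a b : V) : Prop :=
  (∃ p : MPath G a b, p.isInducing W2) ∨ (∃ p : MPath G b a, p.isInducing W2)

/-- The latent projection of `G` onto `W1`: distinct `a, b ∈ W1` are joined iff there is
an inducing path between them in `G` relative to `G.verts ∖ W1`; the edge is `a → b` if
`a` is an ancestor of `b` in `G` but not conversely, and `a ↔ b` if neither is an
ancestor of the other. -/
def project (G : MixedGraph V) (W1 : Set V) : MixedGraph V where
  verts := W1
  dir a b := a ∈ W1 ∧ b ∈ W1 ∧ a ≠ b ∧ InducingAdj G (G.verts \ W1) a b ∧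
    G.anc a b ∧ ¬ G.anc b a
  bi a b := a ∈ W1 ∧ b ∈ W1 ∧ a ≠ b ∧ InducingAdj G (G.verts \ W1) a b ∧
    ¬ G.anc a b ∧ ¬ G.anc b a
  bi_symm h :=
    ⟨h.2.1, h.1, h.2.2.1.symm, Or.symm h.2.2.2.1, h.2.2.2.2.2, h.2.2.2.2.1⟩
  dir_mem h := ⟨h.1, h.2.1⟩
  bi_mem h := ⟨h.1, h.2.1⟩

/-- Two mixed graphs over the same vertex set impose exactly the same m-separation
relations. -/
def MarkovEquiv (G1 G2 : MixedGraph V) : Prop :=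
  ∀ a ∈ G1.verts, ∀ b ∈ G1.verts, a ≠ b → ∀ Z ⊆ G1.verts \ {a, b},
    (mSep G1 a b Z ↔ mSep G2 a b Z)

/-- A list of vertices is an order over (the vertex set of) `G` if it lists each vertex
exactly once. -/
def IsOrder (G : MixedGraph V) (l : List V) : Prop :=
  l.Nodup ∧ ∀ v, v ∈ l ↔ v ∈ G.verts

/-- An r-order of `G`: an order `(X₁, …, Xₙ)` such that each `Xᵢ` is removable in the
induced subgraph `G[{Xᵢ, …, Xₙ}]`. -/
def IsROrder (G : MixedGraph V) (l : List V) : Prop :=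
  IsOrder G l ∧ ∀ (i : ℕ) (h : i < l.length),
    Removable (G.induce {v | v ∈ l.drop i}) (l.get ⟨i, h⟩)

/-- A c-order of a DAG `G`: an order `(X₁, …, Xₙ)` such that each `Xᵢ` has no children
in the induced subgraph `G[{Xᵢ, …, Xₙ}]`. -/
def IsCOrder (G : MixedGraph V) (l : List V) : Prop :=
  IsOrder G l ∧ ∀ (i : ℕ) (h : i < l.length),
    ∀ v, ¬ (G.induce {v' | v' ∈ l.drop i}).dir (l.get ⟨i, h⟩) v

/-- The maximum in-degree of `G`. -/
noncomputable def deltaIn (G : MixedGraph V) : ℕ :=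
  sSup {n | ∃ a ∈ G.verts, n = (G.parents a).ncard}

/-- `Δin⁺(G)`: the maximum of `|PaP(a)|` over the vertices of `G`. -/
noncomputable def deltaInPlus (G : MixedGraph V) : ℕ :=
  sSup {n | ∃ a ∈ G.verts, n = (G.paP a).ncard}

/-- `G` is diamond-free: it contains no induced subgraph on four vertices `a, b, c, d`
whose skeleton has exactly the edges a–b, a–c, a–d, b–d, c–d (with b, c non-adjacent). -/
def DiamondFree (G : MixedGraph V) : Prop :=
  ¬ ∃ a b c d : V, a ∈ G.verts ∧ b ∈ G.verts ∧ c ∈ G.verts ∧ d ∈ G.verts ∧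
    a ≠ b ∧ a ≠ c ∧ a ≠ d ∧ b ≠ c ∧ b ≠ d ∧ c ≠ d ∧
    G.adj a b ∧ G.adj a c ∧ G.adj a d ∧ G.adj b d ∧ G.adj c d ∧ ¬ G.adj b c

end MixedGraph

/-- The cost of an order `(X₁, …, Xₙ)`: `Σₜ |Ne(Xₜ; G_{Vₜ})|` where `Vₜ = {Xₜ, …, Xₙ}`
and `G_{Vₜ}` is the latent projection of `G` onto `Vₜ` (the term for `t = n` is zero). -/
noncomputable def orderCost {V : Type*} (G : MixedGraph V) : List V → ℕ
  | [] => 0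
  | x :: rest => ((G.project {v | v ∈ x :: rest}).neighbors x).ncard + orderCost G rest


/-! ### Auxiliary machinery for stmt_14 -/

namespace S14
open MixedGraph

variable {V : Type*}

section Basics
variable {G : MixedGraph V}

lemma no_cycle (hG : G.IsDAG) {a b : V} (h : G.dir a b) : ¬ G.anc b a :=
  hG.1.no_dir_cycle a b h

lemma dir_ne (hG : G.IsDAG) {a b : V} (h : G.dir a b) : a ≠ b := by
  rintro rfl; exact no_cycle hG h .refl

lemma anc_antisymm (hG : G.IsDAG) {a b : V} (h1 : G.anc a b) (h2 : G.anc b a) : a = b := by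
  rcases Relation.ReflTransGen.cases_head h1 with rfl | ⟨c, hac, hcb⟩
  · rfl
  · exact absurd (hcb.trans h2) (no_cycle hG hac)

lemma anc_step_of_ne {a b : V} (h1 : G.anc a b) (hne : a ≠ b) :
    ∃ c, G.dir a c ∧ G.anc c b := by
  rcases Relation.ReflTransGen.cases_head h1 with rfl | ⟨c, hac, hcb⟩
  · exact absurd rfl hne
  · exact ⟨c, hac, hcb⟩

lemma edir_fb (hG : G.IsDAG) {a b : V} {e : EdgeDir} (h : edirValid G a b e) :
    (e = .fwd ∧ G.dir a b) ∨ (e = .bwd ∧ G.dir b a) := by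
  cases e with
  | fwd => exact Or.inl ⟨rfl, h⟩
  | bwd => exact Or.inr ⟨rfl, h⟩
  | bidir => exact absurd h (hG.2 a b)

@[simp] lemma headAt1_fwd : ¬ headAt1 .fwd := by simp [headAt1]
@[simp] lemma headAt1_bwd : headAt1 .bwd := Or.inl rfl
@[simp] lemma headAt1_bidir : headAt1 .bidir := Or.inr rfl
@[simp] lemma headAt2_fwd : headAt2 .fwd := Or.inl rfl
@[simp] lemma headAt2_bwd : ¬ headAt2 .bwd := by simp [headAt2]
@[simp] lemma headAt2_bidir : headAt2 .bidir := Or.inr rfl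

lemma eq_fwd_of_not_headAt1 {e : EdgeDir} (h : ¬ headAt1 e) : e = .fwd := by
  cases e with
  | fwd => rfl
  | bwd => exact absurd (Or.inl rfl) h
  | bidir => exact absurd (Or.inr rfl) h

lemma eq_bwd_of_not_headAt2 {e : EdgeDir} (h : ¬ headAt2 e) : e = .bwd := by
  cases e with
  | fwd => exact absurd (Or.inl rfl) h
  | bwd => rfl
  | bidir => exact absurd (Or.inr rfl) h

end Basics

/-- A walk (not necessarily injective) in a mixed graph. -/
structure MWalk (G : MixedGraph V) (x y : V) where
  len : ℕ
  len_pos : 0 < len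
  vert : ℕ → V
  edir : ℕ → EdgeDir
  first : vert 0 = x
  last : vert len = y
  mem : ∀ i, i ≤ len → vert i ∈ G.verts
  valid : ∀ i, i < len → edirValid G (vert i) (vert (i + 1)) (edir i)

namespace MWalk

variable {G : MixedGraph V} {x y : V} {Z : Set V}

def collider (p : MWalk G x y) (i : ℕ) : Prop :=
  headAt2 (p.edir (i - 1)) ∧ headAt1 (p.edir i)

/-- A walk is `Z`-open if every interior collider is an ancestor of `Z ∪ {x,y}` and
every interior non-collider avoids `Z`. -/
def IsOpen (p : MWalk G x y) (Z : Set V) : Prop :=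
  ∀ i, 0 < i → i < p.len →
    (p.collider i → ∃ w ∈ Z ∪ ({x, y} : Set V), G.anc (p.vert i) w) ∧
    (¬ p.collider i → p.vert i ∉ Z)

def toPath (p : MWalk G x y)
    (hinj : ∀ i j, i ≤ p.len → j ≤ p.len → p.vert i = p.vert j → i = j) : MPath G x y :=
  ⟨p.len, p.len_pos, p.vert, p.edir, p.first, p.last, p.mem, hinj, p.valid⟩

end MWalk

def _root_.MPath.toWalk {G : MixedGraph V} {x y : V} (p : MPath G x y) : MWalk G x y :=
  ⟨p.len, p.len_pos, p.vert, p.edir, p.first, p.last, p.mem, p.valid⟩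

namespace MWalk

variable {G : MixedGraph V} {x y : V} {Z : Set V}

lemma isOpen_toWalk {p : MPath G x y} (h : ¬ p.blocked Z) : p.toWalk.IsOpen Z := by
  intro i h1 h2
  constructor
  · intro hc
    by_contra hw
    push_neg at hw
    exact h ⟨i, h1, h2, Or.inl ⟨hc, hw⟩⟩
  · intro hc hz
    exact h ⟨i, h1, h2, Or.inr ⟨hc, hz⟩⟩

lemma not_blocked_of_open {p : MPath G x y} (h : p.toWalk.IsOpen Z) : ¬ p.blocked Z := by
  rintro ⟨i, h1, h2, hcase | hcase⟩
  · obtain ⟨w, hw, ha⟩ := (h i h1 h2).1 hcase.1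
    exact hcase.2 w hw ha
  · exact (h i h1 h2).2 hcase.1 hcase.2

/-- On an open walk, the tail of a forward edge is an ancestor of `Z ∪ {x,y}`. -/
lemma descend {p : MWalk G x y} (ho : p.IsOpen Z) :
    ∀ n i, p.len - i = n → i < p.len → p.edir i = .fwd →
      ∃ w ∈ Z ∪ ({x, y} : Set V), G.anc (p.vert i) w := by
  intro n
  induction n using Nat.strong_induction_on with
  | _ n IH =>
    intro i hn hi hf
    have hd : G.dir (p.vert i) (p.vert (i + 1)) := by
      have h := p.valid i hi; rw [hf] at h; exact h
    by_cases hlast : i + 1 = p.len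
    · refine ⟨y, Or.inr (by simp), ?_⟩
      have hv : p.vert (i + 1) = y := by rw [hlast, p.last]
      rw [hv] at hd
      exact Relation.ReflTransGen.single hd
    · have hi1 : i + 1 < p.len := lt_of_le_of_ne (by omega) hlast
      by_cases hf1 : p.edir (i + 1) = .fwd
      · obtain ⟨w, hw, ha⟩ := IH (p.len - (i + 1)) (by omega) (i + 1) rfl hi1 hf1
        exact ⟨w, hw, (Relation.ReflTransGen.single hd).trans ha⟩
      · have hcol : p.collider (i + 1) := by
          constructor
          · rw [show i + 1 - 1 = i from rfl, hf]; exact Or.inl rfl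
          · cases he : p.edir (i + 1) with
            | fwd => exact absurd he hf1
            | bwd => exact Or.inl rfl
            | bidir => exact Or.inr rfl
        obtain ⟨w, hw, ha⟩ := (ho (i + 1) (by omega) hi1).1 hcol
        exact ⟨w, hw, (Relation.ReflTransGen.single hd).trans ha⟩

/-- Splicing out a repeated-vertex segment of a walk. -/
def splice (p : MWalk G x y) (i j : ℕ) (hij : i < j) (hj : j ≤ p.len)
    (hv : p.vert i = p.vert j) (hne : 0 < i ∨ j < p.len) : MWalk G x y where
  len := p.len - (j - i)
  len_pos := by omega
  vert t := if t ≤ i then p.vert t else p.vert (t + (j - i))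
  edir t := if t < i then p.edir t else p.edir (t + (j - i))
  first := by simp [p.first]
  last := by
    by_cases h : p.len - (j - i) ≤ i
    · have hji : j = p.len := by omega
      have : p.len - (j - i) = i := by omega
      rw [this]
      simp only [le_refl, if_pos]
      rw [hv, hji, p.last]
    · rw [if_neg h]
      have : p.len - (j - i) + (j - i) = p.len := by omega
      rw [this, p.last]
  mem := by
    intro t ht
    by_cases h : t ≤ i
    · rw [if_pos h]; exact p.mem t (by omega)
    · rw [if_neg h]; exact p.mem _ (by omega)
  valid := by
    intro t ht
    by_cases h : t < i
    · rw [if_pos h, if_pos (le_of_lt h), if_pos (by omega : t + 1 ≤ i)]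
      exact p.valid t (by omega)
    · rw [if_neg h, if_neg (by omega : ¬ t + 1 ≤ i)]
      by_cases h2 : t = i
      · rw [if_pos (le_of_eq h2), h2, hv]
        have e1 : i + 1 + (j - i) = j + 1 := by omega
        have e2 : i + (j - i) = j := by omega
        rw [e1, e2]
        exact p.valid j (by omega)
      · rw [if_neg (by omega : ¬ t ≤ i)]
        have : t + 1 + (j - i) = t + (j - i) + 1 := by omega
        rw [this]
        exact p.valid _ (by omega)

lemma splice_isOpen {p : MWalk G x y} (ho : p.IsOpen Z) (i j : ℕ) (hij : i < j)
    (hj : j ≤ p.len) (hv : p.vert i = p.vert j) (hne : 0 < i ∨ j < p.len) :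
    (p.splice i j hij hj hv hne).IsOpen Z := by
  set q := p.splice i j hij hj hv hne with hq
  have hqlen : q.len = p.len - (j - i) := rfl
  have hqvert : ∀ t, q.vert t = if t ≤ i then p.vert t else p.vert (t + (j - i)) := fun t => rfl
  have hqedir : ∀ t, q.edir t = if t < i then p.edir t else p.edir (t + (j - i)) := fun t => rfl
  intro t ht0 htl
  rw [hqlen] at htl
  rcases lt_trichotomy t i with hti | hti | hti
  · -- unchanged prefix
    have e2 : q.edir t = p.edir t := by rw [hqedir, if_pos hti]
    have e3 : q.edir (t - 1) = p.edir (t - 1) := by rw [hqedir, if_pos (by omega)]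
    have ev : q.vert t = p.vert t := by rw [hqvert, if_pos (le_of_lt hti)]
    have hcol : q.collider t ↔ p.collider t := by
      unfold MWalk.collider; rw [e2, e3]
    rw [ev]
    constructor
    · intro hc; exact (ho t ht0 (by omega)).1 (hcol.mp hc)
    · intro hc; exact (ho t ht0 (by omega)).2 (fun hpc => hc (hcol.mpr hpc))
  · -- junction
    subst hti
    have hjlen : j < p.len := by omega
    have e2 : q.edir t = p.edir j := by
      rw [hqedir, if_neg (lt_irrefl t)]
      congr 1; omega
    have e3 : q.edir (t - 1) = p.edir (t - 1) := by rw [hqedir, if_pos (by omega)]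
    have ev : q.vert t = p.vert t := by rw [hqvert, if_pos (le_refl t)]
    rw [ev]
    constructor
    · intro hc
      rcases hc with ⟨hc1, hc2⟩
      rw [e3] at hc1; rw [e2] at hc2
      by_cases hh : headAt1 (p.edir t)
      · exact (ho t ht0 (by omega)).1 ⟨hc1, hh⟩
      · have hf : p.edir t = .fwd := eq_fwd_of_not_headAt1 hh
        exact descend ho (p.len - t) t rfl (by omega) hf
    · intro hc
      have := not_and_or.mp (by rw [MWalk.collider, e2, e3] at hc; exact hc)
      rcases this with hh | hh
      · have : ¬ p.collider t := fun hpc => hh hpc.1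
        exact (ho t ht0 (by omega)).2 this
      · have : ¬ p.collider j := fun hpc => hh hpc.2
        have := (ho j (by omega) hjlen).2 this
        rwa [hv]
  · -- shifted suffix
    have e2 : q.edir t = p.edir (t + (j - i)) := by rw [hqedir, if_neg (by omega)]
    have e3 : q.edir (t - 1) = p.edir (t + (j - i) - 1) := by
      rw [hqedir, if_neg (by omega)]
      congr 1; omega
    have ev : q.vert t = p.vert (t + (j - i)) := by rw [hqvert, if_neg (by omega)]
    have hcol : q.collider t ↔ p.collider (t + (j - i)) := by
      unfold MWalk.collider; rw [e2, e3]
    rw [ev]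
    constructor
    · intro hc; exact (ho _ (by omega) (by omega)).1 (hcol.mp hc)
    · intro hc; exact (ho _ (by omega) (by omega)).2 (fun hpc => hc (hcol.mpr hpc))

/-- From an open walk between distinct vertices we can extract an unblocked path. -/
lemma exists_path_of_open (hxy : x ≠ y) :
    ∀ n (p : MWalk G x y), p.len = n → p.IsOpen Z → ∃ q : MPath G x y, ¬ q.blocked Z := by
  intro n
  induction n using Nat.strong_induction_on with
  | _ n IH =>
    intro p hn ho
    by_cases hinj : ∀ i j, i ≤ p.len → j ≤ p.len → p.vert i = p.vert j → i = j
    · exact ⟨p.toPath hinj, not_blocked_of_open ho⟩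
    · push_neg at hinj
      obtain ⟨i, j, hi, hj, hv, hij⟩ := hinj
      -- WLOG i < j
      rcases Nat.lt_or_ge i j with hlt | hge
      · have hne : 0 < i ∨ j < p.len := by
          by_contra hcon
          push_neg at hcon
          have hi0 : i = 0 := by omega
          have hjl : j = p.len := by omega
          rw [hi0, p.first, hjl, p.last] at hv
          exact hxy hv
        refine IH (p.len - (j - i)) (by omega) (p.splice i j hlt hj hv hne) rfl
          (splice_isOpen ho i j hlt hj hv hne)
      · have hlt : j < i := by omega
        have hne : 0 < j ∨ i < p.len := by
          by_contra hcon
          push_neg at hcon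
          have hj0 : j = 0 := by omega
          have hil : i = p.len := by omega
          rw [hj0, p.first, hil, p.last] at hv
          exact hxy hv.symm
        refine IH (p.len - (i - j)) (by omega) (p.splice j i hlt hi hv.symm hne) rfl
          (splice_isOpen ho j i hlt hi hv.symm hne)

end MWalk

end S14

namespace S14
namespace MWalk

variable {V : Type*} {G : MixedGraph V} {x y : V} {Z : Set V}

/-- Drop the single vertex at position `k`, joining its neighbours by a new edge `E`. -/
def dropOne (p : MWalk G x y) (k : ℕ) (hk0 : 0 < k) (hkl : k < p.len) (E : EdgeDir)
    (hE : edirValid G (p.vert (k - 1)) (p.vert (k + 1)) E) : MWalk G x y where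
  len := p.len - 1
  len_pos := by omega
  vert t := if t < k then p.vert t else p.vert (t + 1)
  edir t := if t < k - 1 then p.edir t else if t = k - 1 then E else p.edir (t + 1)
  first := by rw [if_pos hk0, p.first]
  last := by
    rw [if_neg (by omega : ¬ p.len - 1 < k)]
    rw [show p.len - 1 + 1 = p.len by omega, p.last]
  mem := by
    intro t ht
    by_cases h : t < k
    · rw [if_pos h]; exact p.mem t (by omega)
    · rw [if_neg h]; exact p.mem _ (by omega)
  valid := by
    intro t ht
    rcases lt_trichotomy t (k - 1) with h | h | h
    · rw [if_pos h, if_pos (by omega : t < k), if_pos (by omega : t + 1 < k)]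
      exact p.valid t (by omega)
    · rw [if_neg (by omega : ¬ t < k - 1), if_pos h, if_pos (by omega : t < k),
        if_neg (by omega : ¬ t + 1 < k), h]
      rw [show k - 1 + 1 + 1 = k + 1 by omega]
      exact hE
    · rw [if_neg (by omega : ¬ t < k - 1), if_neg (by omega : ¬ t = k - 1),
        if_neg (by omega : ¬ t < k), if_neg (by omega : ¬ t + 1 < k)]
      exact p.valid (t + 1) (by omega)

lemma dropOne_isOpen {p : MWalk G x y} (ho : p.IsOpen Z) (k : ℕ) (hk0 : 0 < k)
    (hkl : k < p.len) (E : EdgeDir)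
    (hE : edirValid G (p.vert (k - 1)) (p.vert (k + 1)) E)
    (HL : 1 < k → ((headAt1 E ↔ headAt1 (p.edir (k - 1))) ∨
      (¬ headAt1 E ∧ p.vert (k - 1) ∉ Z)))
    (HR : k + 1 < p.len → ((headAt2 E ↔ headAt2 (p.edir k)) ∨
      (¬ headAt2 E ∧ p.vert (k + 1) ∉ Z))) :
    (p.dropOne k hk0 hkl E hE).IsOpen Z := by
  set q := p.dropOne k hk0 hkl E hE with hq
  have hqlen : q.len = p.len - 1 := rfl
  have hv : ∀ t, q.vert t = if t < k then p.vert t else p.vert (t + 1) := fun t => rfl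
  have he : ∀ t, q.edir t =
      if t < k - 1 then p.edir t else if t = k - 1 then E else p.edir (t + 1) := fun t => rfl
  intro t ht0 htl
  rw [hqlen] at htl
  rcases lt_trichotomy t (k - 1) with h | h | h
  · have e2 : q.edir t = p.edir t := by rw [he, if_pos h]
    have e3 : q.edir (t - 1) = p.edir (t - 1) := by rw [he, if_pos (by omega)]
    have ev : q.vert t = p.vert t := by rw [hv, if_pos (by omega)]
    have hcol : q.collider t ↔ p.collider t := by
      unfold MWalk.collider; rw [e2, e3]
    rw [ev]
    exact ⟨fun hc => (ho t ht0 (by omega)).1 (hcol.mp hc),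
      fun hc => (ho t ht0 (by omega)).2 (fun hpc => hc (hcol.mpr hpc))⟩
  · -- t = k - 1 (so 1 < k since 0 < t)
    have hk1 : 1 < k := by omega
    have e2 : q.edir t = E := by rw [he, if_neg (by omega), if_pos h]
    have e3 : q.edir (t - 1) = p.edir (t - 1) := by rw [he, if_pos (by omega)]
    have ev : q.vert t = p.vert t := by rw [hv, if_pos (by omega)]
    rw [ev]
    rcases HL hk1 with hiff | ⟨hnh, hnz⟩
    · have hiff' : headAt1 E ↔ headAt1 (p.edir t) := by rw [h]; exact hiff
      have hcol : q.collider t ↔ p.collider t := by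
        unfold MWalk.collider
        rw [e2, e3]
        constructor
        · rintro ⟨a, b⟩; exact ⟨a, hiff'.mp b⟩
        · rintro ⟨a, b⟩; exact ⟨a, hiff'.mpr b⟩
      exact ⟨fun hc => (ho t ht0 (by omega)).1 (hcol.mp hc),
        fun hc => (ho t ht0 (by omega)).2 (fun hpc => hc (hcol.mpr hpc))⟩
    · have hnc : ¬ q.collider t := by
        unfold MWalk.collider; rw [e2]; rintro ⟨a, b⟩; exact hnh b
      have hnz' : p.vert t ∉ Z := by rw [h]; exact hnz
      exact ⟨fun hc => absurd hc hnc, fun _ => hnz'⟩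
  · -- t > k - 1, i.e. t ≥ k
    have htk : k ≤ t := by omega
    have ev : q.vert t = p.vert (t + 1) := by rw [hv, if_neg (by omega)]
    have e2 : q.edir t = p.edir (t + 1) := by rw [he, if_neg (by omega), if_neg (by omega)]
    by_cases h2 : t = k
    · -- junction on the right: new status at t=k versus old status at k+1
      subst h2
      have e3 : q.edir (t - 1) = E := by rw [he, if_neg (by omega), if_pos (by omega)]
      have hk1l : t + 1 < p.len := by omega
      rw [ev]
      rcases HR hk1l with hiff | ⟨hnh, hnz⟩
      · have hcol : q.collider t ↔ p.collider (t + 1) := by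
          unfold MWalk.collider
          rw [e2, e3, show t + 1 - 1 = t from rfl]
          constructor
          · rintro ⟨a, b⟩; exact ⟨hiff.mp a, b⟩
          · rintro ⟨a, b⟩; exact ⟨hiff.mpr a, b⟩
        exact ⟨fun hc => (ho _ (by omega) (by omega)).1 (hcol.mp hc),
          fun hc => (ho _ (by omega) (by omega)).2 (fun hpc => hc (hcol.mpr hpc))⟩
      · have hnc : ¬ q.collider t := by
          unfold MWalk.collider; rw [e3]; rintro ⟨a, b⟩; exact hnh a
        exact ⟨fun hc => absurd hc hnc, fun _ => hnz⟩
    · have e3 : q.edir (t - 1) = p.edir (t + 1 - 1) := by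
        rw [he, if_neg (by omega), if_neg (by omega)]
        congr 1; omega
      have hcol : q.collider t ↔ p.collider (t + 1) := by
        unfold MWalk.collider; rw [e2, e3]
      rw [ev]
      exact ⟨fun hc => (ho _ (by omega) (by omega)).1 (hcol.mp hc),
        fun hc => (ho _ (by omega) (by omega)).2 (fun hpc => hc (hcol.mpr hpc))⟩

/-- Drop the two vertices at positions `r, r+1`, joining by a new edge `E`. -/
def dropTwo (p : MWalk G x y) (r : ℕ) (hr0 : 0 < r) (hrl : r + 1 < p.len) (E : EdgeDir)
    (hE : edirValid G (p.vert (r - 1)) (p.vert (r + 2)) E) : MWalk G x y where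
  len := p.len - 2
  len_pos := by omega
  vert t := if t < r then p.vert t else p.vert (t + 2)
  edir t := if t < r - 1 then p.edir t else if t = r - 1 then E else p.edir (t + 2)
  first := by rw [if_pos hr0, p.first]
  last := by
    rw [if_neg (by omega : ¬ p.len - 2 < r), show p.len - 2 + 2 = p.len by omega, p.last]
  mem := by
    intro t ht
    by_cases h : t < r
    · rw [if_pos h]; exact p.mem t (by omega)
    · rw [if_neg h]; exact p.mem _ (by omega)
  valid := by
    intro t ht
    rcases lt_trichotomy t (r - 1) with h | h | h
    · rw [if_pos h, if_pos (by omega : t < r), if_pos (by omega : t + 1 < r)]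
      exact p.valid t (by omega)
    · rw [if_neg (by omega : ¬ t < r - 1), if_pos h, if_pos (by omega : t < r),
        if_neg (by omega : ¬ t + 1 < r), h]
      rw [show r - 1 + 1 + 2 = r + 2 by omega]
      exact hE
    · rw [if_neg (by omega : ¬ t < r - 1), if_neg (by omega : ¬ t = r - 1),
        if_neg (by omega : ¬ t < r), if_neg (by omega : ¬ t + 1 < r)]
      exact p.valid (t + 2) (by omega)

lemma dropTwo_isOpen {p : MWalk G x y} (ho : p.IsOpen Z) (r : ℕ) (hr0 : 0 < r)
    (hrl : r + 1 < p.len) (E : EdgeDir)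
    (hE : edirValid G (p.vert (r - 1)) (p.vert (r + 2)) E)
    (HL : 1 < r → (headAt1 E ↔ headAt1 (p.edir (r - 1))))
    (HR : r + 2 < p.len → (headAt2 E ↔ headAt2 (p.edir (r + 1)))) :
    (p.dropTwo r hr0 hrl E hE).IsOpen Z := by
  set q := p.dropTwo r hr0 hrl E hE with hq
  have hqlen : q.len = p.len - 2 := rfl
  have hv : ∀ t, q.vert t = if t < r then p.vert t else p.vert (t + 2) := fun t => rfl
  have he : ∀ t, q.edir t =
      if t < r - 1 then p.edir t else if t = r - 1 then E else p.edir (t + 2) := fun t => rfl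
  intro t ht0 htl
  rw [hqlen] at htl
  rcases lt_trichotomy t (r - 1) with h | h | h
  · have e2 : q.edir t = p.edir t := by rw [he, if_pos h]
    have e3 : q.edir (t - 1) = p.edir (t - 1) := by rw [he, if_pos (by omega)]
    have ev : q.vert t = p.vert t := by rw [hv, if_pos (by omega)]
    have hcol : q.collider t ↔ p.collider t := by
      unfold MWalk.collider; rw [e2, e3]
    rw [ev]
    exact ⟨fun hc => (ho t ht0 (by omega)).1 (hcol.mp hc),
      fun hc => (ho t ht0 (by omega)).2 (fun hpc => hc (hcol.mpr hpc))⟩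
  · -- t = r - 1, 1 < r
    have hr1 : 1 < r := by omega
    have e2 : q.edir t = E := by rw [he, if_neg (by omega), if_pos h]
    have e3 : q.edir (t - 1) = p.edir (t - 1) := by rw [he, if_pos (by omega)]
    have ev : q.vert t = p.vert t := by rw [hv, if_pos (by omega)]
    have hiff : headAt1 E ↔ headAt1 (p.edir t) := by rw [h]; exact HL hr1
    have hcol : q.collider t ↔ p.collider t := by
      unfold MWalk.collider
      rw [e2, e3]
      constructor
      · rintro ⟨a, b⟩; exact ⟨a, hiff.mp b⟩
      · rintro ⟨a, b⟩; exact ⟨a, hiff.mpr b⟩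
    rw [ev]
    exact ⟨fun hc => (ho t ht0 (by omega)).1 (hcol.mp hc),
      fun hc => (ho t ht0 (by omega)).2 (fun hpc => hc (hcol.mpr hpc))⟩
  · -- t ≥ r
    have htr : r ≤ t := by omega
    have ev : q.vert t = p.vert (t + 2) := by rw [hv, if_neg (by omega)]
    have e2 : q.edir t = p.edir (t + 2) := by rw [he, if_neg (by omega), if_neg (by omega)]
    by_cases h2 : t = r
    · subst h2
      have e3 : q.edir (t - 1) = E := by rw [he, if_neg (by omega), if_pos (by omega)]
      have hiff := HR (by omega)
      have hcol : q.collider t ↔ p.collider (t + 2) := by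
        unfold MWalk.collider
        rw [e2, e3, show t + 2 - 1 = t + 1 from rfl]
        constructor
        · rintro ⟨a, b⟩; exact ⟨hiff.mp a, b⟩
        · rintro ⟨a, b⟩; exact ⟨hiff.mpr a, b⟩
      rw [ev]
      exact ⟨fun hc => (ho _ (by omega) (by omega)).1 (hcol.mp hc),
        fun hc => (ho _ (by omega) (by omega)).2 (fun hpc => hc (hcol.mpr hpc))⟩
    · have e3 : q.edir (t - 1) = p.edir (t + 2 - 1) := by
        rw [he, if_neg (by omega), if_neg (by omega)]
        congr 1; omega
      have hcol : q.collider t ↔ p.collider (t + 2) := by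
        unfold MWalk.collider; rw [e2, e3]
      rw [ev]
      exact ⟨fun hc => (ho _ (by omega) (by omega)).1 (hcol.mp hc),
        fun hc => (ho _ (by omega) (by omega)).2 (fun hpc => hc (hcol.mpr hpc))⟩

/-- Replace the vertex at position `k` by `u`, keeping the same edge orientations. -/
def replaceVert (p : MWalk G x y) (k : ℕ) (hk0 : 0 < k) (hkl : k < p.len) (u : V)
    (hu : u ∈ G.verts)
    (hE1 : edirValid G (p.vert (k - 1)) u (p.edir (k - 1)))
    (hE2 : edirValid G u (p.vert (k + 1)) (p.edir k)) : MWalk G x y where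
  len := p.len
  len_pos := p.len_pos
  vert t := if t = k then u else p.vert t
  edir := p.edir
  first := by rw [if_neg (by omega), p.first]
  last := by rw [if_neg (by omega), p.last]
  mem := by
    intro t ht
    by_cases h : t = k
    · rw [if_pos h]; exact hu
    · rw [if_neg h]; exact p.mem t ht
  valid := by
    intro t ht
    rcases lt_trichotomy t k with h | h | h
    · rw [if_neg (by omega : ¬ t = k)]
      by_cases h2 : t + 1 = k
      · rw [if_pos h2]
        have h3 : t = k - 1 := by omega
        subst h3
        exact hE1
      · rw [if_neg h2]; exact p.valid t ht
    · rw [if_pos h, if_neg (by omega : ¬ t + 1 = k), h]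
      exact hE2
    · rw [if_neg (by omega : ¬ t = k), if_neg (by omega : ¬ t + 1 = k)]
      exact p.valid t ht

lemma replaceVert_isOpen {p : MWalk G x y} (ho : p.IsOpen Z) (k : ℕ) (hk0 : 0 < k)
    (hkl : k < p.len) (u : V) (hu : u ∈ G.verts)
    (hE1 : edirValid G (p.vert (k - 1)) u (p.edir (k - 1)))
    (hE2 : edirValid G u (p.vert (k + 1)) (p.edir k))
    (HC : p.collider k → ∃ w ∈ Z ∪ ({x, y} : Set V), G.anc u w)
    (HN : ¬ p.collider k → u ∉ Z) :
    (p.replaceVert k hk0 hkl u hu hE1 hE2).IsOpen Z := by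
  set q := p.replaceVert k hk0 hkl u hu hE1 hE2 with hq
  have hqlen : q.len = p.len := rfl
  have hv : ∀ t, q.vert t = if t = k then u else p.vert t := fun t => rfl
  have he : ∀ t, q.edir t = p.edir t := fun t => rfl
  have hcol : ∀ t, q.collider t ↔ p.collider t := by
    intro t; unfold MWalk.collider; rw [he, he]
  intro t ht0 htl
  rw [hqlen] at htl
  by_cases h : t = k
  · subst h
    rw [hv, if_pos rfl]
    exact ⟨fun hc => HC ((hcol t).mp hc), fun hc => HN (fun hpc => hc ((hcol t).mpr hpc))⟩
  · rw [hv, if_neg h]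
    exact ⟨fun hc => (ho t ht0 htl).1 ((hcol t).mp hc),
      fun hc => (ho t ht0 htl).2 (fun hpc => hc ((hcol t).mpr hpc))⟩

end MWalk
end S14

namespace S14
open MixedGraph

variable {V : Type*} {G : MixedGraph V}

/-- Single-edge path `a → b`. -/
def pathF (hG : G.IsDAG) {a b : V} (h : G.dir a b) : MPath G a b where
  len := 1
  len_pos := one_pos
  vert i := if i = 0 then a else b
  edir _ := .fwd
  first := by simp
  last := by simp
  mem := by
    intro i hi
    by_cases h0 : i = 0
    · simpa [h0] using (G.dir_mem h).1
    · simpa [h0] using (G.dir_mem h).2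
  inj := by
    intro i j hi hj hv
    have hab : a ≠ b := dir_ne hG h
    interval_cases i <;> interval_cases j <;> simp_all
  valid := by
    intro i hi
    have h0 : i = 0 := by omega
    subst h0
    simpa [edirValid] using h

/-- Single-edge path `a ← b`. -/
def pathB (hG : G.IsDAG) {a b : V} (h : G.dir b a) : MPath G a b where
  len := 1
  len_pos := one_pos
  vert i := if i = 0 then a else b
  edir _ := .bwd
  first := by simp
  last := by simp
  mem := by
    intro i hi
    by_cases h0 : i = 0
    · simpa [h0] using (G.dir_mem h).2
    · simpa [h0] using (G.dir_mem h).1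
  inj := by
    intro i j hi hj hv
    have hab : b ≠ a := dir_ne hG h
    interval_cases i <;> interval_cases j <;> simp_all
  valid := by
    intro i hi
    have h0 : i = 0 := by omega
    subst h0
    simpa [edirValid] using h

/-- Length-two collider path `a → c ← b`. -/
def pathCC (hG : G.IsDAG) {a b c : V} (h1 : G.dir a c) (h2 : G.dir b c) (hab : a ≠ b) :
    MPath G a b where
  len := 2
  len_pos := by omega
  vert i := if i = 0 then a else if i = 1 then c else b
  edir i := if i = 0 then .fwd else .bwd
  first := by simp
  last := by simp
  mem := by
    intro i hi
    by_cases h0 : i = 0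
    · simpa [h0] using (G.dir_mem h1).1
    · by_cases hh1 : i = 1
      · simpa [h0, hh1] using (G.dir_mem h1).2
      · simpa [h0, hh1] using (G.dir_mem h2).1
  inj := by
    intro i j hi hj hv
    have h3 : a ≠ c := dir_ne hG h1
    have h4 : b ≠ c := dir_ne hG h2
    interval_cases i <;> interval_cases j <;> simp_all
  valid := by
    intro i hi
    interval_cases i
    · simpa [edirValid] using h1
    · simpa [edirValid] using h2

lemma pathF_no_interior (hG : G.IsDAG) {a b : V} (h : G.dir a b) {Z : Set V} :
    ¬ (pathF hG h).blocked Z := by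
  rintro ⟨i, h1, h2, -⟩
  have : (pathF hG h).len = 1 := rfl
  omega

lemma pathB_no_interior (hG : G.IsDAG) {a b : V} (h : G.dir b a) {Z : Set V} :
    ¬ (pathB hG h).blocked Z := by
  rintro ⟨i, h1, h2, -⟩
  have : (pathB hG h).len = 1 := rfl
  omega

/-- Characterisation of the Markov boundary in a DAG. -/
lemma mem_mb_iff (hG : G.IsDAG) {x b : V} :
    b ∈ G.mb x ↔ b ≠ x ∧ (G.dir b x ∨ G.dir x b ∨ ∃ c, G.dir b c ∧ G.dir x c) := by
  constructor
  · rintro ⟨hne, p, hp⟩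
    refine ⟨hne, ?_⟩
    rcases Nat.lt_or_ge p.len 3 with hlen | hlen
    · rcases Nat.lt_or_ge p.len 2 with hlen1 | hlen2
      · -- len = 1
        have h1 : p.len = 1 := by have := p.len_pos; omega
        have hv := p.valid 0 (by omega)
        have hl1 : p.vert 1 = x := by rw [← h1]; exact p.last
        rcases edir_fb hG hv with ⟨-, hd⟩ | ⟨-, hd⟩
        · left; rw [p.first, hl1] at hd; exact hd
        · right; left; rw [p.first, hl1] at hd; exact hd
      · -- len = 2
        have h2 : p.len = 2 := by omega
        have hcol := hp 1 (by omega) (by omega)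
        obtain ⟨hc1, hc2⟩ := hcol
        have hv0 := p.valid 0 (by omega)
        have hv1 := p.valid 1 (by omega)
        rcases edir_fb hG hv0 with ⟨-, hd0⟩ | ⟨he0, -⟩
        · rcases edir_fb hG hv1 with ⟨he1, -⟩ | ⟨-, hd1⟩
          · rw [show (1:ℕ) = 1 from rfl] at hc2
            rw [he1] at hc2
            exact absurd hc2 headAt1_fwd
          · right; right
            have hl2 : p.vert 2 = x := by rw [← h2]; exact p.last
            rw [p.first] at hd0
            rw [hl2] at hd1
            exact ⟨p.vert 1, hd0, hd1⟩
        · rw [show (1:ℕ) - 1 = 0 from rfl, he0] at hc1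
          exact absurd hc1 headAt2_bwd
    · -- len ≥ 3 : impossible
      exfalso
      have hcol1 := hp 1 (by omega) (by omega)
      have hcol2 := hp 2 (by omega) (by omega)
      have h1 := hcol1.2
      have h2 := hcol2.1
      rw [show (2:ℕ) - 1 = 1 from rfl] at h2
      have hv1 := p.valid 1 (by omega)
      rcases edir_fb hG hv1 with ⟨he, -⟩ | ⟨he, -⟩
      · rw [he] at h1; exact headAt1_fwd h1
      · rw [he] at h2; exact headAt2_bwd h2
  · rintro ⟨hne, hd | hd | ⟨c, h1, h2⟩⟩
    · refine ⟨hne, pathF hG hd, ?_⟩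
      intro i hi1 hi2
      have : (pathF hG hd).len = 1 := rfl
      omega
    · refine ⟨hne, pathB hG hd, ?_⟩
      intro i hi1 hi2
      have : (pathB hG hd).len = 1 := rfl
      omega
    · refine ⟨hne, pathCC hG h1 h2 hne, ?_⟩
      intro i hi1 hi2
      have hl : (pathCC hG h1 h2 hne).len = 2 := rfl
      have hi : i = 1 := by omega
      subst hi
      constructor
      · have : (pathCC hG h1 h2 hne).edir 0 = .fwd := rfl
        rw [show (1:ℕ) - 1 = 0 from rfl, this]
        exact headAt2_fwd
      · have : (pathCC hG h1 h2 hne).edir 1 = .bwd := rfl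
        rw [this]
        exact headAt1_bwd

lemma mb_subset_verts (hG : G.IsDAG) {x : V} : G.mb x ⊆ G.verts := by
  intro b hb
  rcases (mem_mb_iff hG).mp hb with ⟨-, hd | hd | ⟨c, h1, -⟩⟩
  · exact (G.dir_mem hd).1
  · exact (G.dir_mem hd).2
  · exact (G.dir_mem h1).1

lemma mb_not_self {x : V} : x ∉ G.mb x := fun h => h.1 rfl

/-- Rerouting of ancestral paths away from `x`, given that all parents of `x`
are parents of all children of `x`. -/
lemma anc_induce (hG : G.IsDAG) {x w : V} (hw : w ≠ x)
    (hC1 : ∀ ⦃a b⦄, G.dir a x → G.dir x b → G.dir a b) {c : V}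
    (h : G.anc c w) (hc : c ≠ x) : (G.induce (G.verts \ {x})).anc c w := by
  set G' := G.induce (G.verts \ {x}) with hG'
  have step : ∀ {a b : V}, G.dir a b → a ≠ x → b ≠ x → G'.dir a b := by
    intro a b hd ha hb
    exact ⟨hd, ⟨(G.dir_mem hd).1, ha⟩, ⟨(G.dir_mem hd).2, hb⟩⟩
  have key : ∀ c : V, G.anc c w →
      ((c ≠ x → G'.anc c w) ∧ (c = x → ∀ p, G.dir p x → p ≠ x → G'.anc p w)) := by
    intro c h
    induction h using Relation.ReflTransGen.head_induction_on with
    | refl => exact ⟨fun _ => Relation.ReflTransGen.refl, fun hcx => absurd hcx hw⟩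
    | @head a b hab hbw ih =>
      constructor
      · intro hax
        by_cases hbx : b = x
        · exact ih.2 hbx a (hbx ▸ hab) hax
        · exact Relation.ReflTransGen.head (step hab hax hbx) (ih.1 hbx)
      · intro hax p hp hpx
        have hab' : G.dir x b := hax ▸ hab
        have hbx : b ≠ x := by
          rintro rfl
          exact no_cycle hG hab' Relation.ReflTransGen.refl
        exact Relation.ReflTransGen.head (step (hC1 hp hab') hpx hbx) (ih.1 hbx)
  exact (key c h).1 hc

lemma anc_of_induce {W : Set V} {a b : V} (h : (G.induce W).anc a b) : G.anc a b :=
  Relation.ReflTransGen.mono (r := (G.induce W).dir) (p := G.dir) (fun _ _ hd => hd.1) a b h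

/-- Every finite nonempty DAG has a sink. -/
lemma exists_sink [Fintype V] (hG : G.IsDAG) (hne : G.verts.Nonempty) :
    ∃ x ∈ G.verts, ∀ c, ¬ G.dir x c := by
  obtain ⟨a, ha, hmin⟩ := Set.exists_min_image G.verts
    (fun v => {b | G.anc v b}.ncard) (Set.toFinite _) hne
  refine ⟨a, ha, ?_⟩
  intro c hd
  have hc : c ∈ G.verts := (G.dir_mem hd).2
  have hsub : {b | G.anc c b} ⊆ {b | G.anc a b} := by
    intro b hb
    exact Relation.ReflTransGen.head hd hb
  have hax : a ∈ {b | G.anc a b} := Relation.ReflTransGen.refl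
  have hnax : a ∉ {b | G.anc c b} := fun hin => no_cycle hG hd hin
  have hss : {b | G.anc c b} ⊂ {b | G.anc a b} := ⟨hsub, fun hin => hnax (hin hax)⟩
  have hlt := Set.ncard_lt_ncard hss (Set.toFinite _)
  have := hmin c hc
  omega

/-- A sink satisfies conditions (1) and (2). -/
lemma sink_satisfies [Fintype V] (hG : G.IsDAG) {x : V} (hx : x ∈ G.verts)
    (hsink : ∀ c, ¬ G.dir x c) (m : ℕ) :
    ∀ S ⊆ G.mb x, S.ncard ≤ m - 2 →
      (∀ y ∈ G.mb x \ S, ∀ z ∈ G.mb x \ S, y ≠ z →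
        ¬ mSep G y z ((G.mb x ∪ {x}) \ ({y, z} ∪ S))) ∧
      (∀ y ∈ G.mb x \ S, ¬ mSep G x y (G.mb x \ ({y} ∪ S))) := by
  intro S hS _
  have hpa : ∀ y ∈ G.mb x, G.dir y x := by
    intro y hy
    rcases (mem_mb_iff hG).mp hy with ⟨-, hd | hd | ⟨c, -, h2⟩⟩
    · exact hd
    · exact absurd hd (hsink y)
    · exact absurd h2 (hsink c)
  constructor
  · rintro y ⟨hy, hyS⟩ z ⟨hz, hzS⟩ hyz hsep
    have hyx := hpa y hy
    have hzx := hpa z hz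
    have hblocked := hsep (pathCC hG hyx hzx hyz)
    obtain ⟨i, hi1, hi2, hcase⟩ := hblocked
    have hl : (pathCC hG hyx hzx hyz).len = 2 := rfl
    have hi : i = 1 := by omega
    subst hi
    have hv1 : (pathCC hG hyx hzx hyz).vert 1 = x := rfl
    have hcol : (pathCC hG hyx hzx hyz).collider 1 := by
      constructor
      · exact (rfl : (pathCC hG hyx hzx hyz).edir 0 = .fwd) ▸ headAt2_fwd
      · exact (rfl : (pathCC hG hyx hzx hyz).edir 1 = .bwd) ▸ headAt1_bwd
    have hxmem : x ∈ (G.mb x ∪ {x}) \ ({y, z} ∪ S) := by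
      constructor
      · exact Or.inr rfl
      · rintro (hin | hin)
        · rcases hin with hin | hin
          · exact hy.1 (by simpa using hin.symm)
          · exact hz.1 (by simpa using hin.symm)
        · exact mb_not_self (hS hin)
    rcases hcase with ⟨-, hanc⟩ | ⟨hnc, -⟩
    · exact hanc x (Or.inl hxmem) (by rw [hv1]; exact Relation.ReflTransGen.refl)
    · exact hnc hcol
  · rintro y ⟨hy, hyS⟩ hsep
    exact pathB_no_interior hG (hpa y hy) (hsep (pathB hG (hpa y hy)))

end S14

namespace S14
open MixedGraph

variable {V : Type*} {G : MixedGraph V}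

namespace MPathFacts

variable {a b : V} {Z : Set V}

lemma open_facts {p : MPath G a b} (hbl : ¬ p.blocked Z) :
    ∀ i, 0 < i → i < p.len →
      ((p.collider i → ∃ w ∈ Z ∪ ({a, b} : Set V), G.anc (p.vert i) w) ∧
       (¬ p.collider i → p.vert i ∉ Z)) := by
  intro i h1 h2
  constructor
  · intro hc
    by_contra hw
    push_neg at hw
    exact hbl ⟨i, h1, h2, Or.inl ⟨hc, hw⟩⟩
  · intro hc hz
    exact hbl ⟨i, h1, h2, Or.inr ⟨hc, hz⟩⟩

lemma collider_of {p : MPath G a b} {i : ℕ} (hf : p.edir (i - 1) = .fwd)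
    (hb : p.edir i = .bwd) : p.collider i :=
  ⟨by rw [hf]; exact headAt2_fwd, by rw [hb]; exact headAt1_bwd⟩

lemma not_collider_left {p : MPath G a b} {i : ℕ} (hb : p.edir (i - 1) = .bwd) :
    ¬ p.collider i := fun h => by
  have h1 := h.1; rw [hb] at h1; exact headAt2_bwd h1

lemma not_collider_right {p : MPath G a b} {i : ℕ} (hf : p.edir i = .fwd) :
    ¬ p.collider i := fun h => by
  have h2 := h.2; rw [hf] at h2; exact headAt1_fwd h2

lemma dir_of_fwd {p : MPath G a b} {i : ℕ} (h : i < p.len) (he : p.edir i = .fwd) :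
    G.dir (p.vert i) (p.vert (i + 1)) := by
  have hv := p.valid i h; rw [he] at hv; exact hv

lemma dir_of_bwd {p : MPath G a b} {i : ℕ} (h : i < p.len) (he : p.edir i = .bwd) :
    G.dir (p.vert (i + 1)) (p.vert i) := by
  have hv := p.valid i h; rw [he] at hv; exact hv

end MPathFacts

open MPathFacts

/-- Separation of a child `b` of `x` from a non-adjacent `α ∈ Mb(x)` with `b` not an
ancestor of `α`, conditioning on `(Mb(x) ∪ {x})` minus the proper descendants of `b`
in `Mb(x)`. -/
lemma sep_child (hG : G.IsDAG) {x α b : V} (hxb : G.dir x b) (hα : α ∈ G.mb x)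
    (hnadj : ¬ G.adj α b) (hnanc : ¬ G.anc b α) :
    mSep G α b ((G.mb x ∪ {x}) \ ({α, b} ∪ {s | s ∈ G.mb x ∧ G.anc b s ∧ s ≠ b})) := by
  set S : Set V := {s | s ∈ G.mb x ∧ G.anc b s ∧ s ≠ b} with hSdef
  set T : Set V := (G.mb x ∪ {x}) \ ({α, b} ∪ S) with hTdef
  intro p
  set n := p.len with hn
  have hn1 : 1 ≤ n := p.len_pos
  have hvlast : p.vert n = b := p.last
  have hvfirst : p.vert 0 = α := p.first
  have hαb : α ≠ b := by
    rintro rfl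
    exact hnanc Relation.ReflTransGen.refl
  rcases edir_fb hG (p.valid (n - 1) (by omega)) with ⟨he, hd⟩ | ⟨he, hd⟩
  · -- last edge points into b : its tail q = vert (n-1) is a parent of b, in T, non-collider
    rw [show n - 1 + 1 = n by omega, hvlast] at hd
    -- hd : G.dir (p.vert (n-1)) b
    have hn2 : 2 ≤ n := by
      by_contra hcon
      have h1 : n = 1 := by omega
      rw [h1] at hd
      simp only [Nat.sub_self] at hd
      rw [hvfirst] at hd
      exact hnadj (Or.inl hd)
    have hq : p.vert (n - 1) ∈ T := by
      have hqb : p.vert (n - 1) ≠ b := dir_ne hG hd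
      have hqα : p.vert (n - 1) ≠ α := by
        intro hqa
        rw [hqa] at hd
        exact hnadj (Or.inl hd)
      constructor
      · by_cases hqx : p.vert (n - 1) = x
        · exact Or.inr hqx
        · exact Or.inl ((mem_mb_iff hG).mpr ⟨hqx, Or.inr (Or.inr ⟨b, hd, hxb⟩)⟩)
      · rintro (hin | hin)
        · rcases hin with hin | hin
          · exact hqα hin
          · exact hqb hin
        · exact no_cycle hG hd hin.2.1
    refine ⟨n - 1, by omega, by omega, Or.inr ⟨not_collider_right he, hq⟩⟩
  · -- last edge points out of b : descending suffix
    have hstart : n - 1 ≤ n - 1 ∧ ∀ i, n - 1 ≤ i → i ≤ n - 1 → p.edir i = .bwd := by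
      refine ⟨le_refl _, fun i h1 h2 => ?_⟩
      rw [show i = n - 1 by omega]
      exact he
    clear he hd
    have main : ∀ j, (j ≤ n - 1 ∧ ∀ i, j ≤ i → i ≤ n - 1 → p.edir i = .bwd) →
        p.blocked T := by
      intro j
      induction j using Nat.strong_induction_on with
      | _ j IH =>
        rintro ⟨hj1, hj2⟩
        have hchain : ∀ d i, i + d = n → j ≤ i → G.anc b (p.vert i) := by
          intro d
          induction d with
          | zero =>
            intro i h hji
            rw [show i = n by omega, hvlast]
            exact Relation.ReflTransGen.refl
          | succ d IHd =>
            intro i h hji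
            have he : p.edir i = .bwd := hj2 i hji (by omega)
            have hd := dir_of_bwd (by omega) he
            exact (IHd (i + 1) (by omega) (by omega)).tail hd
        by_cases hj0 : j = 0
        · exfalso
          have := hchain n 0 (by omega) (by omega)
          rw [hvfirst] at this
          exact hnanc this
        · rcases edir_fb hG (p.valid (j - 1) (by omega)) with ⟨he, hd⟩ | ⟨he, hd⟩
          · -- collider at j, blocked
            have hcol := collider_of he (hj2 j (le_refl j) hj1)
            have hancj : G.anc b (p.vert j) := hchain (n - j) j (by omega) (le_refl j)
            refine ⟨j, by omega, by omega, Or.inl ⟨hcol, ?_⟩⟩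
            intro w hw hancw
            have hbw : G.anc b w := hancj.trans hancw
            rcases hw with hw | hw
            · rcases hw.1 with hmb | hx
              · refine hw.2 (Or.inr ?_)
                refine ⟨hmb, hbw, ?_⟩
                intro hwb
                exact hw.2 (Or.inl (Or.inr hwb))
              · rw [hx] at hbw
                exact no_cycle hG hxb hbw
            · rcases hw with hw | hw
              · rw [hw] at hbw
                exact hnanc hbw
              · rw [hw] at hancw
                have heq : p.vert j = b := anc_antisymm hG hancw hancj
                have heq2 : p.vert j = p.vert n := heq.trans hvlast.symm
                have := p.inj j n (by omega) (le_refl n) heq2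
                omega
          · -- extend the descending suffix
            refine IH (j - 1) (by omega) ⟨by omega, fun i h1 h2 => ?_⟩
            by_cases hij : i = j - 1
            · rw [hij]; exact he
            · exact hj2 i (by omega) h2
    exact main (n - 1) hstart

end S14

namespace S14
open MixedGraph MPathFacts

variable {V : Type*} {G : MixedGraph V}

/-- Separation of `x` from a non-adjacent member `t` of its Markov boundary. -/
lemma sep_coparent (hG : G.IsDAG) {x t : V} (ht : t ∈ G.mb x) (hnadj : ¬ G.adj x t) :
    mSep G x t (G.mb x \
      ({t} ∪ {s | s ∈ G.mb x ∧ ∃ c, G.dir x c ∧ G.dir t c ∧ G.anc c s})) := by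
  set Zone : Set V := {v | ∃ c, G.dir x c ∧ G.dir t c ∧ G.anc c v} with hZdef
  have hZanc : ∀ v w, v ∈ Zone → G.anc v w → w ∈ Zone := by
    rintro v w ⟨c, h1, h2, h3⟩ ha
    exact ⟨c, h1, h2, h3.trans ha⟩
  have hZx : ∀ v ∈ Zone, ¬ G.anc v x := by
    rintro v ⟨c, h1, h2, h3⟩ h
    exact no_cycle hG h1 (h3.trans h)
  have hZt : ∀ v ∈ Zone, ¬ G.anc v t := by
    rintro v ⟨c, h1, h2, h3⟩ h
    exact no_cycle hG h2 (h3.trans h)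
  intro p
  by_contra hbl
  have ho := open_facts hbl
  set n := p.len with hn
  have hn1 : 1 ≤ n := p.len_pos
  have hvlast : p.vert n = t := p.last
  have hvfirst : p.vert 0 = x := p.first
  have hv_ne_t : ∀ i, i < n → p.vert i ≠ t := by
    intro i hi heq
    have : p.vert i = p.vert n := heq.trans hvlast.symm
    have := p.inj i n (by omega) (le_refl n) this
    omega
  have hv_ne_x : ∀ i, 0 < i → i ≤ n → p.vert i ≠ x := by
    intro i h1 h2 heq
    have : p.vert i = p.vert 0 := heq.trans hvfirst.symm
    have := p.inj i 0 (by omega) (by omega) this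
    omega
  have ZoneCollider : ∀ i, 0 < i → i < n → p.vert i ∈ Zone → p.collider i → False := by
    intro i h1 h2 hz hcol
    obtain ⟨w, hw, hancw⟩ := (ho i h1 h2).1 hcol
    have hwz : w ∈ Zone := hZanc _ _ hz hancw
    rcases hw with hwT | hwxt
    · exact hwT.2 (Or.inr ⟨hwT.1, hwz⟩)
    · rcases hwxt with hwx | hwt
      · rw [hwx] at hwz
        exact hZx x hwz Relation.ReflTransGen.refl
      · rw [Set.mem_singleton_iff.mp hwt] at hwz
        exact hZt t hwz Relation.ReflTransGen.refl
  have claim : ∀ i, i < n → (p.edir i = EdgeDir.fwd ∧ (0 < i → p.vert i ∈ Zone)) := by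
    intro i
    induction i using Nat.strong_induction_on with
    | _ i IH =>
      intro hi
      by_cases hi0 : i = 0
      · subst hi0
        refine ⟨?_, by omega⟩
        rcases edir_fb hG (p.valid 0 (by omega)) with ⟨he, _⟩ | ⟨he, hd⟩
        · exact he
        · exfalso
          rw [hvfirst] at hd
          -- hd : G.dir (p.vert 1) x
          have hn2 : 2 ≤ n := by
            rcases Nat.lt_or_ge n 2 with h2 | h2
            · exfalso
              have hv1t : p.vert 1 = t := by
                rw [show (1 : ℕ) = n by omega]; exact hvlast
              rw [hv1t] at hd
              exact hnadj (Or.inr (Or.inl hd))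
            · exact h2
          have hnc : ¬ p.collider 1 :=
            not_collider_left (by rw [show (1 : ℕ) - 1 = 0 from rfl]; exact he)
          refine (ho 1 (by omega) (by omega)).2 hnc ⟨?_, ?_⟩
          · exact (mem_mb_iff hG).mpr ⟨hv_ne_x 1 (by omega) (by omega), Or.inl hd⟩
          · rintro (h1t | h1S)
            · exact hv_ne_t 1 (by omega) (Set.mem_singleton_iff.mp h1t)
            · exact hZx _ h1S.2 (Relation.ReflTransGen.single hd)
      · -- i ≥ 1
        have hprev := IH (i - 1) (by omega) (by omega)
        have hdprev : G.dir (p.vert (i - 1)) (p.vert i) := by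
          have h := dir_of_fwd (show i - 1 < p.len by omega) hprev.1
          rw [show i - 1 + 1 = i by omega] at h
          exact h
        by_cases hi1 : i = 1
        · subst hi1
          have hx1 : G.dir x (p.vert 1) := by
            rw [show (1 : ℕ) - 1 = 0 from rfl, hvfirst] at hdprev
            exact hdprev
          have hfwd : p.edir 1 = EdgeDir.fwd := by
            rcases edir_fb hG (p.valid 1 hi) with ⟨he, _⟩ | ⟨he, hd⟩
            · exact he
            · exfalso
              -- hd : G.dir (p.vert 2) (p.vert 1)
              have hcol : p.collider 1 :=
                collider_of (by rw [show (1 : ℕ) - 1 = 0 from rfl]; exact hprev.1) he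
              have hzone1 : p.vert 1 ∈ Zone := by
                by_cases h2n : 2 = n
                · have hqt : p.vert 2 = t := by rw [h2n]; exact hvlast
                  rw [hqt] at hd
                  exact ⟨p.vert 1, hx1, hd, Relation.ReflTransGen.refl⟩
                · have h2lt : 2 < n := by omega
                  have hnc2 : ¬ p.collider 2 :=
                    not_collider_left (by rw [show (2 : ℕ) - 1 = 1 from rfl]; exact he)
                  have hq_mb : p.vert 2 ∈ G.mb x :=
                    (mem_mb_iff hG).mpr ⟨hv_ne_x 2 (by omega) (by omega),
                      Or.inr (Or.inr ⟨p.vert 1, hd, hx1⟩)⟩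
                  have hq_notT := (ho 2 (by omega) h2lt).2 hnc2
                  have hq_zone : p.vert 2 ∈ Zone := by
                    by_contra hqz
                    refine hq_notT ⟨hq_mb, ?_⟩
                    rintro (hqt | hqS)
                    · exact hv_ne_t 2 h2lt (Set.mem_singleton_iff.mp hqt)
                    · exact hqz hqS.2
                  exact hZanc _ _ hq_zone (Relation.ReflTransGen.single hd)
              exact ZoneCollider 1 (by omega) hi hzone1 hcol
          refine ⟨hfwd, fun _ => ?_⟩
          have hnc : ¬ p.collider 1 := not_collider_right hfwd
          have hnotT := (ho 1 (by omega) hi).2 hnc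
          by_contra hz
          refine hnotT ⟨(mem_mb_iff hG).mpr ⟨hv_ne_x 1 (by omega) (by omega),
            Or.inr (Or.inl hx1)⟩, ?_⟩
          rintro (h1t | h1S)
          · exact hv_ne_t 1 hi (Set.mem_singleton_iff.mp h1t)
          · exact hz h1S.2
        · -- i ≥ 2
          have hzone : p.vert i ∈ Zone :=
            hZanc _ _ (hprev.2 (by omega)) (Relation.ReflTransGen.single hdprev)
          refine ⟨?_, fun _ => hzone⟩
          rcases edir_fb hG (p.valid i hi) with ⟨he, _⟩ | ⟨he, _⟩
          · exact he
          · exfalso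
            exact ZoneCollider i (by omega) hi hzone (collider_of hprev.1 he)
  -- conclude
  have hlast := claim (n - 1) (by omega)
  have hdlast : G.dir (p.vert (n - 1)) t := by
    have h := dir_of_fwd (show n - 1 < p.len by omega) hlast.1
    rw [show n - 1 + 1 = n by omega, hvlast] at h
    exact h
  by_cases hn2 : n = 1
  · have h0 : p.vert (n - 1) = x := by rw [show n - 1 = 0 by omega]; exact hvfirst
    rw [h0] at hdlast
    exact hnadj (Or.inl hdlast)
  · have hzlast : p.vert (n - 1) ∈ Zone := hlast.2 (by omega)
    exact hZt t (hZanc _ _ hzlast (Relation.ReflTransGen.single hdlast))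
      Relation.ReflTransGen.refl

end S14

namespace S14
open MixedGraph

variable {V : Type*} {G : MixedGraph V}

lemma adj_symm {a b : V} (h : G.adj a b) : G.adj b a := by
  rcases h with h | h | h
  · exact Or.inr (Or.inl h)
  · exact Or.inl h
  · exact Or.inr (Or.inr (G.bi_symm h))

lemma anc_ncard_lt [Fintype V] (hG : G.IsDAG) {a b : V} (h : G.anc a b) (hne : a ≠ b) :
    {w | G.anc b w}.ncard < {w | G.anc a w}.ncard := by
  have hsub : {w | G.anc b w} ⊆ {w | G.anc a w} := fun w hw => h.trans hw
  have hmem : a ∈ {w | G.anc a w} := Relation.ReflTransGen.refl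
  have hnmem : a ∉ {w | G.anc b w} := by
    intro hin
    exact hne (anc_antisymm hG h hin)
  exact Set.ncard_lt_ncard ⟨hsub, fun hin => hnmem (hin hmem)⟩ (Set.toFinite _)

lemma ncard_union_two [Fintype V] {S : Set V} {a b : V} (ha : a ∉ S) (hb : b ∉ S)
    (hab : a ≠ b) : (S ∪ {a, b}).ncard = S.ncard + 2 := by
  have h1 : S ∪ {a, b} = insert a (insert b S) := by
    ext v
    simp only [Set.mem_union, Set.mem_insert_iff, Set.mem_singleton_iff]
    tauto
  rw [h1, Set.ncard_insert_of_notMem (by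
      simp only [Set.mem_insert_iff]
      push_neg
      exact ⟨hab, ha⟩) (Set.Finite.insert b (Set.toFinite S)),
    Set.ncard_insert_of_notMem hb (Set.toFinite S)]

/-- The machine: the two conditions force adjacency between every non-ancestral
pair consisting of a Markov-boundary member and a child of `x`. -/
lemma machine [Fintype V] (hG : G.IsDAG) {x : V} (m : ℕ)
    (hclique : ∀ C : Set V, C ⊆ G.verts →
      (∀ a ∈ C, ∀ b ∈ C, a ≠ b → G.adj a b) → C.ncard ≤ m)
    (hcond : ∀ S ⊆ G.mb x, S.ncard ≤ m - 2 →
      (∀ y ∈ G.mb x \ S, ∀ z ∈ G.mb x \ S, y ≠ z →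
        ¬ mSep G y z ((G.mb x ∪ {x}) \ ({y, z} ∪ S))) ∧
      (∀ y ∈ G.mb x \ S, ¬ mSep G x y (G.mb x \ ({y} ∪ S)))) :
    ∀ α b, α ∈ G.mb x → G.dir x b → ¬ G.anc b α → α ≠ b → G.adj α b := by
  intro α0 b0 hα0 hxb0 hnanc0 hne0
  by_contra hnadj0
  set B : Set V := {b | G.dir x b ∧
    ∃ α, α ∈ G.mb x ∧ ¬ G.adj α b ∧ ¬ G.anc b α ∧ α ≠ b} with hBdef
  have hB0 : b0 ∈ B := ⟨hxb0, α0, hα0, hnadj0, hnanc0, hne0⟩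
  set f : V → ℕ := fun v => {w | G.anc v w}.ncard with hfdef
  obtain ⟨b, hbB, hbmin⟩ := Set.exists_min_image B f (Set.toFinite _) ⟨b0, hB0⟩
  obtain ⟨hxb, α, hαmb, hnadj, hnanc, hne⟩ := hbB
  have hbx : b ≠ x := (dir_ne hG hxb).symm
  have hbmb : b ∈ G.mb x := (mem_mb_iff hG).mpr ⟨hbx, Or.inr (Or.inl hxb)⟩
  have hxv : x ∈ G.verts := (G.dir_mem hxb).1
  have hmin : ∀ b' ∈ B, ¬ (G.anc b b' ∧ b' ≠ b) := by
    rintro b' hb' ⟨h1, h2⟩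
    have ha := anc_ncard_lt hG h1 (fun hh => h2 hh.symm)
    have hb := hbmin b' hb'
    simp only [hfdef] at hb
    omega
  have adjCL : ∀ s, G.dir x s → G.anc b s → s ≠ b →
      ∀ α', α' ∈ G.mb x → ¬ G.anc s α' → α' ≠ s → G.adj α' s := by
    intro s hxs hbs hsb α' hα' hna hne'
    by_contra hno
    exact hmin s ⟨hxs, α', hα', hno, hna, hne'⟩ ⟨hbs, hsb⟩
  have goodSet : ∀ S' : Set V, (∀ s ∈ S', G.dir x s ∧ G.anc b s ∧ s ≠ b) →
      S'.ncard ≤ m - 2 := by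
    intro S' hS'
    have hsub : S' ∪ {x, b} ⊆ G.verts := by
      rintro v (hv | hv)
      · exact (G.dir_mem (hS' v hv).1).2
      · rcases hv with hv | hv
        · rw [hv]; exact hxv
        · rw [Set.mem_singleton_iff.mp hv]; exact (G.dir_mem hxb).2
    have hSx : ∀ s ∈ S', G.adj x s := fun s hs => Or.inl (hS' s hs).1
    have hSb : ∀ s ∈ S', G.adj b s := by
      intro s hs
      obtain ⟨hxs, hbs, hsb⟩ := hS' s hs
      refine adjCL s hxs hbs hsb b hbmb ?_ (fun hh => hsb hh.symm)
      intro hsbanc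
      exact hsb (anc_antisymm hG hsbanc hbs)
    have hSS : ∀ s ∈ S', ∀ s' ∈ S', s ≠ s' → G.adj s s' := by
      intro s hs s' hs' hss
      obtain ⟨hxs, hbs, hsb⟩ := hS' s hs
      obtain ⟨hxs', hbs', hsb'⟩ := hS' s' hs'
      have hsmb : s ∈ G.mb x :=
        (mem_mb_iff hG).mpr ⟨(dir_ne hG hxs).symm, Or.inr (Or.inl hxs)⟩
      by_cases h1 : G.anc s s'
      · have h2 : ¬ G.anc s' s := fun hh => hss (anc_antisymm hG h1 hh)
        exact adjCL s' hxs' hbs' hsb' s hsmb h2 hss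
      · exact adj_symm (adjCL s hxs hbs hsb s'
          ((mem_mb_iff hG).mpr ⟨(dir_ne hG hxs').symm, Or.inr (Or.inl hxs')⟩)
          h1 (fun hh => hss hh.symm))
    have hmem3 : ∀ v ∈ S' ∪ ({x, b} : Set V), v ∈ S' ∨ v = x ∨ v = b := by
      rintro v (hv | hv)
      · exact Or.inl hv
      · rcases hv with hv | hv
        · exact Or.inr (Or.inl hv)
        · exact Or.inr (Or.inr (Set.mem_singleton_iff.mp hv))
    have hadj : ∀ a ∈ S' ∪ ({x, b} : Set V), ∀ c ∈ S' ∪ ({x, b} : Set V),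
        a ≠ c → G.adj a c := by
      intro a ha c hc hac
      rcases hmem3 a ha with ha' | ha' | ha' <;> rcases hmem3 c hc with hc' | hc' | hc'
      · exact hSS a ha' c hc' hac
      · rw [hc']; exact adj_symm (hSx a ha')
      · rw [hc']; exact adj_symm (hSb a ha')
      · rw [ha']; exact hSx c hc'
      · rw [ha', hc'] at hac; exact absurd rfl hac
      · rw [ha', hc']; exact Or.inl hxb
      · rw [ha']; exact hSb c hc'
      · rw [ha', hc']; exact adj_symm (Or.inl hxb)
      · rw [ha', hc'] at hac; exact absurd rfl hac
    have hxS : x ∉ S' := fun hin => no_cycle hG hxb (hS' x hin).2.1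
    have hbS : b ∉ S' := fun hin => (hS' b hin).2.2 rfl
    have hcl := hclique (S' ∪ {x, b}) hsub hadj
    rw [ncard_union_two hxS hbS (fun hh => hbx hh.symm)] at hcl
    omega
  -- case split on coparent-descendants of b
  by_cases hC : ∀ w, ¬ (w ∈ G.mb x ∧ ¬ G.adj x w ∧ G.anc b w ∧ w ≠ b)
  · -- no coparent strict descendants: use condition 1 with the set of all
    -- strict descendants of b in the Markov boundary
    have hCLgood : ∀ s ∈ {s | s ∈ G.mb x ∧ G.anc b s ∧ s ≠ b}, G.dir x s ∧ G.anc b s ∧ s ≠ b := by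
      rintro s ⟨hsmb, hbs, hsb⟩
      refine ⟨?_, hbs, hsb⟩
      by_cases hadjxs : G.adj x s
      · rcases hadjxs with h | h | h
        · exact h
        · exact absurd (hbs.tail h) (no_cycle hG hxb)
        · exact absurd h (hG.2 x s)
      · exact absurd ⟨hsmb, hadjxs, hbs, hsb⟩ (hC s)
    have hsize := goodSet _ hCLgood
    have h1 := (hcond {s | s ∈ G.mb x ∧ G.anc b s ∧ s ≠ b} (fun s hs => hs.1) hsize).1
      α ⟨hαmb, fun hin => hnanc hin.2.1⟩ b ⟨hbmb, fun hin => hin.2.2 rfl⟩ hne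
    exact h1 (sep_child hG hxb hαmb hnadj hnanc)
  · -- there is a coparent strict descendant: use condition 2 on a minimal one
    push_neg at hC
    obtain ⟨t0, ht0⟩ := hC
    obtain ⟨t, htC, htmin⟩ := Set.exists_min_image
      {w | w ∈ G.mb x ∧ ¬ G.adj x w ∧ G.anc b w ∧ w ≠ b} f (Set.toFinite _) ⟨t0, ht0⟩
    obtain ⟨htmb, hnadjxt, hbt, htb⟩ := htC
    have hStgood : ∀ s ∈ {s | s ∈ G.mb x ∧ ∃ c, G.dir x c ∧ G.dir t c ∧ G.anc c s},
        G.dir x s ∧ G.anc b s ∧ s ≠ b := by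
      rintro s ⟨hsmb, c, hxc, htc, hcs⟩
      have hbc : G.anc b c := hbt.tail htc
      have hcb : c ≠ b := by
        rintro rfl
        exact no_cycle hG htc hbt
      have hbs : G.anc b s := hbc.trans hcs
      have hsb : s ≠ b := by
        rintro rfl
        exact hcb (anc_antisymm hG hcs hbc)
      have hst : s ≠ t := by
        rintro rfl
        exact no_cycle hG htc hcs
      have hts : G.anc t s := (Relation.ReflTransGen.single htc).trans hcs
      refine ⟨?_, hbs, hsb⟩
      by_cases hadjxs : G.adj x s
      · rcases hadjxs with h | h | h
        · exact h
        · exact absurd (hbs.tail h) (no_cycle hG hxb)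
        · exact absurd h (hG.2 x s)
      · exfalso
        have hsC : s ∈ {w | w ∈ G.mb x ∧ ¬ G.adj x w ∧ G.anc b w ∧ w ≠ b} :=
          ⟨hsmb, hadjxs, hbs, hsb⟩
        have h1 := anc_ncard_lt hG hts hst.symm
        have h2 := htmin s hsC
        simp only [hfdef] at h2
        omega
    have hsize := goodSet _ hStgood
    have htnotSt : t ∉ {s | s ∈ G.mb x ∧ ∃ c, G.dir x c ∧ G.dir t c ∧ G.anc c s} := by
      rintro ⟨-, c, hxc, htc, hct⟩
      exact no_cycle hG htc hct
    have h2 := (hcond {s | s ∈ G.mb x ∧ ∃ c, G.dir x c ∧ G.dir t c ∧ G.anc c s}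
      (fun s hs => hs.1) hsize).2 t ⟨htmb, htnotSt⟩
    exact h2 (sep_coparent hG htmb hnadjxt)

/-- Consequences: the three structural conditions. -/
lemma structC (hG : G.IsDAG) {x : V}
    (hM : ∀ α b, α ∈ G.mb x → G.dir x b → ¬ G.anc b α → α ≠ b → G.adj α b) :
    (∀ a u, G.dir a x → G.dir x u → G.dir a u) ∧
    (∀ a b, G.dir x a → G.dir x b → a ≠ b → G.dir a b ∨ G.dir b a) ∧
    (∀ a b w, G.dir x a → G.dir x b → G.dir a b → G.dir w a → w ≠ x → G.dir w b) := by
  refine ⟨?_, ?_, ?_⟩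
  · intro a u hax hxu
    have hanc : ¬ G.anc u a := by
      intro h
      exact no_cycle hG hxu (h.tail hax)
    have hne : a ≠ u := by
      rintro rfl
      exact hanc Relation.ReflTransGen.refl
    have hamb : a ∈ G.mb x := (mem_mb_iff hG).mpr ⟨dir_ne hG hax, Or.inl hax⟩
    rcases hM a u hamb hxu hanc hne with h | h | h
    · exact h
    · exact absurd (Relation.ReflTransGen.single h) hanc
    · exact absurd h (hG.2 a u)
  · intro a b hxa hxb hab
    by_cases h1 : G.anc a b
    · have h2 : ¬ G.anc b a := fun hh => hab (anc_antisymm hG h1 hh)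
      have hamb : a ∈ G.mb x := (mem_mb_iff hG).mpr ⟨(dir_ne hG hxa).symm, Or.inr (Or.inl hxa)⟩
      rcases hM a b hamb hxb h2 hab with h | h | h
      · exact Or.inl h
      · exact Or.inr h
      · exact absurd h (hG.2 a b)
    · have hbmb : b ∈ G.mb x := (mem_mb_iff hG).mpr ⟨(dir_ne hG hxb).symm, Or.inr (Or.inl hxb)⟩
      rcases hM b a hbmb hxa h1 (fun hh => hab hh.symm) with h | h | h
      · exact Or.inr h
      · exact Or.inl h
      · exact absurd h (hG.2 b a)
  · intro a b w hxa hxb hab hwa hwx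
    have hwmb : w ∈ G.mb x := (mem_mb_iff hG).mpr ⟨hwx, Or.inr (Or.inr ⟨a, hwa, hxa⟩)⟩
    have hnanc : ¬ G.anc b w := by
      intro h
      exact no_cycle hG hwa (Relation.ReflTransGen.head hab h)
    have hne : w ≠ b := by
      rintro rfl
      exact hnanc Relation.ReflTransGen.refl
    rcases hM w b hwmb hxb hnanc hne with h | h | h
    · exact h
    · exact absurd (Relation.ReflTransGen.single h) hnanc
    · exact absurd h (hG.2 w b)

end S14

namespace S14
open MixedGraph

variable {V : Type*} {G : MixedGraph V}

/-- Surgery: an unblocked path through `x` yields an open walk avoiding `x`. -/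
lemma surgery (hG : G.IsDAG) {x y z : V} {Z : Set V}
    (hC1 : ∀ a u, G.dir a x → G.dir x u → G.dir a u)
    (hC2 : ∀ a b, G.dir x a → G.dir x b → a ≠ b → G.dir a b ∨ G.dir b a)
    (hC3 : ∀ a b w, G.dir x a → G.dir x b → G.dir a b → G.dir w a → w ≠ x → G.dir w b)
    (hZx : x ∉ Z) (hyx : y ≠ x) (hzx : z ≠ x)
    (p : MPath G y z) (hbl : ¬ p.blocked Z)
    (k : ℕ) (hkle : k ≤ p.len) (hvk : p.vert k = x) :
    ∃ W : MWalk G y z, W.IsOpen Z ∧ ∀ t, t ≤ W.len → W.vert t ≠ x := by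
  set W := p.toWalk with hWdef
  have ho : W.IsOpen Z := MWalk.isOpen_toWalk hbl
  have hlen : W.len = p.len := rfl
  have hvert : ∀ i, W.vert i = p.vert i := fun _ => rfl
  have hk0 : 0 < k := by
    rcases Nat.eq_zero_or_pos k with h | h
    · exfalso; rw [h, p.first] at hvk; exact hyx hvk
    · exact h
  have hkl : k < p.len := by
    rcases Nat.lt_or_ge k p.len with h | h
    · exact h
    · exfalso
      have hkk : k = p.len := by omega
      rw [hkk, p.last] at hvk
      exact hzx hvk
  have hnx : ∀ i, i ≤ p.len → i ≠ k → p.vert i ≠ x := by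
    intro i h1 h2 heq
    exact h2 (p.inj i k h1 (by omega) (heq.trans hvk.symm))
  have hWvk : W.vert k = x := hvk
  have hkl' : k < W.len := hkl
  have hk1l : k - 1 < W.len := by omega
  rcases edir_fb hG (W.valid (k - 1) hk1l) with ⟨he1, hd1⟩ | ⟨he1, hd1⟩ <;>
    rcases edir_fb hG (W.valid k hkl') with ⟨he2, hd2⟩ | ⟨he2, hd2⟩
  · -- case 1 : a → x → b
    rw [show k - 1 + 1 = k by omega, hWvk] at hd1
    rw [hWvk] at hd2
    have hE : edirValid G (W.vert (k - 1)) (W.vert (k + 1)) EdgeDir.fwd :=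
      hC1 _ _ hd1 hd2
    refine ⟨W.dropOne k hk0 hkl' .fwd hE,
      MWalk.dropOne_isOpen ho k hk0 hkl' .fwd hE
        (fun _ => Or.inl (by rw [he1]))
        (fun _ => Or.inl (by rw [he2])), ?_⟩
    intro t ht
    have hv' : (W.dropOne k hk0 hkl' .fwd hE).vert t =
        if t < k then W.vert t else W.vert (t + 1) := rfl
    have hl' : (W.dropOne k hk0 hkl' .fwd hE).len = W.len - 1 := rfl
    rw [hl'] at ht
    rw [hv']
    by_cases h : t < k
    · rw [if_pos h]; exact hnx t (by omega) (by omega)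
    · rw [if_neg h]; exact hnx (t + 1) (by omega) (by omega)
  · -- case 4 : a → x ← b (collider at k)
    rw [show k - 1 + 1 = k by omega, hWvk] at hd1
    rw [hWvk] at hd2
    have hcol : W.collider k :=
      ⟨by rw [he1]; exact headAt2_fwd, by rw [he2]; exact headAt1_bwd⟩
    obtain ⟨w, hwmem, hancw⟩ := (ho k hk0 hkl').1 hcol
    rw [hWvk] at hancw
    have hwx : w ≠ x := by
      rcases hwmem with hw | hw
      · intro heq; rw [heq] at hw; exact hZx hw
      · rcases hw with hw | hw
        · rw [hw]; exact hyx
        · rw [Set.mem_singleton_iff.mp hw]; exact hzx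
    obtain ⟨u, hxu, hancu⟩ := anc_step_of_ne hancw (fun heq => hwx heq.symm)
    have hux : u ≠ x := (dir_ne hG hxu).symm
    have hu : u ∈ G.verts := (G.dir_mem hxu).2
    have hE1 : edirValid G (W.vert (k - 1)) u (W.edir (k - 1)) := by
      rw [he1]; exact hC1 _ _ hd1 hxu
    have hE2 : edirValid G u (W.vert (k + 1)) (W.edir k) := by
      rw [he2]; exact hC1 _ _ hd2 hxu
    refine ⟨W.replaceVert k hk0 hkl' u hu hE1 hE2,
      MWalk.replaceVert_isOpen ho k hk0 hkl' u hu hE1 hE2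
        (fun _ => ⟨w, hwmem, hancu⟩) (fun hnc => absurd hcol hnc), ?_⟩
    intro t ht
    have hv' : (W.replaceVert k hk0 hkl' u hu hE1 hE2).vert t =
        if t = k then u else W.vert t := rfl
    have hl' : (W.replaceVert k hk0 hkl' u hu hE1 hE2).len = W.len := rfl
    rw [hl'] at ht
    rw [hv']
    by_cases h : t = k
    · rw [if_pos h]; exact hux
    · rw [if_neg h]; exact hnx t (by omega) h
  · -- case 3 : a ← x → b
    rw [show k - 1 + 1 = k by omega] at hd1
    rw [hWvk] at hd1 hd2
    -- hd1 : G.dir x (W.vert (k-1)), hd2 : G.dir x (W.vert (k+1))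
    have hab : W.vert (k - 1) ≠ W.vert (k + 1) := by
      intro heq
      have := p.inj (k - 1) (k + 1) (by omega) (by omega) heq
      omega
    rcases hC2 _ _ hd1 hd2 hab with hfb | hbf
    · -- a → b
      have hE : edirValid G (W.vert (k - 1)) (W.vert (k + 1)) EdgeDir.fwd := hfb
      have HR : k + 1 < W.len →
          ((headAt2 EdgeDir.fwd ↔ headAt2 (W.edir k)) ∨
           (¬ headAt2 EdgeDir.fwd ∧ W.vert (k + 1) ∉ Z)) :=
        fun _ => Or.inl (by rw [he2])
      by_cases hk1 : 1 < k
      · rcases edir_fb hG (W.valid (k - 2) (by omega)) with ⟨he3, hd3⟩ | ⟨he3, hd3⟩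
        · -- w → a : use C3 and drop both a and x
          rw [show k - 2 + 1 = k - 1 by omega] at hd3
          have hwx2 : W.vert (k - 2) ≠ x := hnx (k - 2) (by omega) (by omega)
          have hwb : G.dir (W.vert (k - 2)) (W.vert (k + 1)) :=
            hC3 _ _ _ hd1 hd2 hfb hd3 hwx2
          have hE2 : edirValid G (W.vert (k - 1 - 1)) (W.vert (k - 1 + 2)) EdgeDir.fwd := by
            rw [show k - 1 - 1 = k - 2 by omega, show k - 1 + 2 = k + 1 by omega]
            exact hwb
          have hr0 : 0 < k - 1 := by omega
          have hrl : k - 1 + 1 < W.len := by omega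
          refine ⟨W.dropTwo (k - 1) hr0 hrl .fwd hE2,
            MWalk.dropTwo_isOpen ho (k - 1) hr0 hrl .fwd hE2
              (fun _ => by rw [show k - 1 - 1 = k - 2 by omega, he3])
              (fun _ => by rw [show k - 1 + 1 = k by omega, he2]), ?_⟩
          intro t ht
          have hv' : (W.dropTwo (k - 1) hr0 hrl .fwd hE2).vert t =
              if t < k - 1 then W.vert t else W.vert (t + 2) := rfl
          have hl' : (W.dropTwo (k - 1) hr0 hrl .fwd hE2).len = W.len - 2 := rfl
          rw [hl'] at ht
          rw [hv']
          by_cases h : t < k - 1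
          · rw [if_pos h]; exact hnx t (by omega) (by omega)
          · rw [if_neg h]; exact hnx (t + 2) (by omega) (by omega)
        · -- old a was a non-collider, so a ∉ Z : drop x only
          have hnca : ¬ W.collider (k - 1) := by
            intro hc
            have hc1 := hc.1
            rw [show k - 1 - 1 = k - 2 by omega, he3] at hc1
            exact headAt2_bwd hc1
          have haZ : W.vert (k - 1) ∉ Z := (ho (k - 1) (by omega) (by omega)).2 hnca
          refine ⟨W.dropOne k hk0 hkl' .fwd hE,
            MWalk.dropOne_isOpen ho k hk0 hkl' .fwd hE
              (fun _ => Or.inr ⟨headAt1_fwd, haZ⟩) HR, ?_⟩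
          intro t ht
          have hv' : (W.dropOne k hk0 hkl' .fwd hE).vert t =
              if t < k then W.vert t else W.vert (t + 1) := rfl
          have hl' : (W.dropOne k hk0 hkl' .fwd hE).len = W.len - 1 := rfl
          rw [hl'] at ht
          rw [hv']
          by_cases h : t < k
          · rw [if_pos h]; exact hnx t (by omega) (by omega)
          · rw [if_neg h]; exact hnx (t + 1) (by omega) (by omega)
      · -- k = 1 : left endpoint, drop x only
        refine ⟨W.dropOne k hk0 hkl' .fwd hE,
          MWalk.dropOne_isOpen ho k hk0 hkl' .fwd hE
            (fun h => absurd h (by omega)) HR, ?_⟩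
        intro t ht
        have hv' : (W.dropOne k hk0 hkl' .fwd hE).vert t =
            if t < k then W.vert t else W.vert (t + 1) := rfl
        have hl' : (W.dropOne k hk0 hkl' .fwd hE).len = W.len - 1 := rfl
        rw [hl'] at ht
        rw [hv']
        by_cases h : t < k
        · rw [if_pos h]; exact hnx t (by omega) (by omega)
        · rw [if_neg h]; exact hnx (t + 1) (by omega) (by omega)
    · -- b → a
      have hE : edirValid G (W.vert (k - 1)) (W.vert (k + 1)) EdgeDir.bwd := hbf
      have HL : 1 < k →
          ((headAt1 EdgeDir.bwd ↔ headAt1 (W.edir (k - 1))) ∨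
           (¬ headAt1 EdgeDir.bwd ∧ W.vert (k - 1) ∉ Z)) :=
        fun _ => Or.inl (by rw [he1])
      by_cases hk1 : k + 1 < W.len
      · rcases edir_fb hG (W.valid (k + 1) hk1) with ⟨he4, hd4⟩ | ⟨he4, hd4⟩
        · -- old b was a non-collider, so b ∉ Z : drop x only
          have hncb : ¬ W.collider (k + 1) := by
            intro hc
            have hc2 := hc.2
            rw [he4] at hc2
            exact headAt1_fwd hc2
          have hbZ : W.vert (k + 1) ∉ Z := (ho (k + 1) (by omega) hk1).2 hncb
          refine ⟨W.dropOne k hk0 hkl' .bwd hE,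
            MWalk.dropOne_isOpen ho k hk0 hkl' .bwd hE HL
              (fun _ => Or.inr ⟨headAt2_bwd, hbZ⟩), ?_⟩
          intro t ht
          have hv' : (W.dropOne k hk0 hkl' .bwd hE).vert t =
              if t < k then W.vert t else W.vert (t + 1) := rfl
          have hl' : (W.dropOne k hk0 hkl' .bwd hE).len = W.len - 1 := rfl
          rw [hl'] at ht
          rw [hv']
          by_cases h : t < k
          · rw [if_pos h]; exact hnx t (by omega) (by omega)
          · rw [if_neg h]; exact hnx (t + 1) (by omega) (by omega)
        · -- w → b : use C3 and drop both x and b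
          -- hd4 : G.dir (W.vert (k+2)) (W.vert (k+1))
          have hwx2 : W.vert (k + 2) ≠ x := hnx (k + 2) (by omega) (by omega)
          have hwa : G.dir (W.vert (k + 2)) (W.vert (k - 1)) :=
            hC3 _ _ _ hd2 hd1 hbf hd4 hwx2
          have hE2 : edirValid G (W.vert (k - 1)) (W.vert (k + 2)) EdgeDir.bwd := hwa
          have hrl : k + 1 < W.len := hk1
          refine ⟨W.dropTwo k hk0 hrl .bwd hE2,
            MWalk.dropTwo_isOpen ho k hk0 hrl .bwd hE2
              (fun _ => by rw [he1])
              (fun _ => by rw [he4]), ?_⟩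
          intro t ht
          have hv' : (W.dropTwo k hk0 hrl .bwd hE2).vert t =
              if t < k then W.vert t else W.vert (t + 2) := rfl
          have hl' : (W.dropTwo k hk0 hrl .bwd hE2).len = W.len - 2 := rfl
          rw [hl'] at ht
          rw [hv']
          by_cases h : t < k
          · rw [if_pos h]; exact hnx t (by omega) (by omega)
          · rw [if_neg h]; exact hnx (t + 2) (by omega) (by omega)
      · -- k + 1 = len : right endpoint, drop x only
        refine ⟨W.dropOne k hk0 hkl' .bwd hE,
          MWalk.dropOne_isOpen ho k hk0 hkl' .bwd hE HL
            (fun h => absurd h (by omega)), ?_⟩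
        intro t ht
        have hv' : (W.dropOne k hk0 hkl' .bwd hE).vert t =
            if t < k then W.vert t else W.vert (t + 1) := rfl
        have hl' : (W.dropOne k hk0 hkl' .bwd hE).len = W.len - 1 := rfl
        rw [hl'] at ht
        rw [hv']
        by_cases h : t < k
        · rw [if_pos h]; exact hnx t (by omega) (by omega)
        · rw [if_neg h]; exact hnx (t + 1) (by omega) (by omega)
  · -- case 2 : a ← x ← b
    rw [show k - 1 + 1 = k by omega] at hd1
    rw [hWvk] at hd1 hd2
    -- hd1 : G.dir x (W.vert (k-1)), hd2 : G.dir (W.vert (k+1)) x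
    have hE : edirValid G (W.vert (k - 1)) (W.vert (k + 1)) EdgeDir.bwd :=
      hC1 _ _ hd2 hd1
    refine ⟨W.dropOne k hk0 hkl' .bwd hE,
      MWalk.dropOne_isOpen ho k hk0 hkl' .bwd hE
        (fun _ => Or.inl (by rw [he1]))
        (fun _ => Or.inl (by rw [he2])), ?_⟩
    intro t ht
    have hv' : (W.dropOne k hk0 hkl' .bwd hE).vert t =
        if t < k then W.vert t else W.vert (t + 1) := rfl
    have hl' : (W.dropOne k hk0 hkl' .bwd hE).len = W.len - 1 := rfl
    rw [hl'] at ht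
    rw [hv']
    by_cases h : t < k
    · rw [if_pos h]; exact hnx t (by omega) (by omega)
    · rw [if_neg h]; exact hnx (t + 1) (by omega) (by omega)

end S14

namespace S14
open MixedGraph

variable {V : Type*} {G : MixedGraph V}

/-- Lift a path of an induced subgraph to the ambient graph. -/
def liftPath {W0 : Set V} {y z : V} (p' : MPath (G.induce W0) y z) : MPath G y z where
  len := p'.len
  len_pos := p'.len_pos
  vert := p'.vert
  edir := p'.edir
  first := p'.first
  last := p'.last
  mem i hi := (p'.mem i hi).1
  inj := p'.inj
  valid := by
    intro i hi
    have hv := p'.valid i hi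
    cases he : p'.edir i <;> rw [he] at hv <;> exact hv.1

/-- Inject a path avoiding the removed part into the induced subgraph. -/
def injectPath {W0 : Set V} {y z : V} (p : MPath G y z)
    (hav : ∀ i, i ≤ p.len → p.vert i ∈ W0) : MPath (G.induce W0) y z where
  len := p.len
  len_pos := p.len_pos
  vert := p.vert
  edir := p.edir
  first := p.first
  last := p.last
  mem i hi := ⟨p.mem i hi, hav i hi⟩
  inj := p.inj
  valid := by
    intro i hi
    have hv := p.valid i hi
    cases he : p.edir i
    · rw [he] at hv
      exact ⟨hv, hav i (by omega), hav (i + 1) (by omega)⟩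
    · rw [he] at hv
      exact ⟨hv, hav (i + 1) (by omega), hav i (by omega)⟩
    · rw [he] at hv
      exact ⟨hv, hav i (by omega), hav (i + 1) (by omega)⟩

/-- Inject a walk avoiding the removed part into the induced subgraph. -/
def injectWalk {W0 : Set V} {y z : V} (W : MWalk G y z)
    (hav : ∀ i, i ≤ W.len → W.vert i ∈ W0) : MWalk (G.induce W0) y z where
  len := W.len
  len_pos := W.len_pos
  vert := W.vert
  edir := W.edir
  first := W.first
  last := W.last
  mem i hi := ⟨W.mem i hi, hav i hi⟩
  valid := by
    intro i hi
    have hv := W.valid i hi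
    cases he : W.edir i
    · rw [he] at hv
      exact ⟨hv, hav i (by omega), hav (i + 1) (by omega)⟩
    · rw [he] at hv
      exact ⟨hv, hav (i + 1) (by omega), hav i (by omega)⟩
    · rw [he] at hv
      exact ⟨hv, hav i (by omega), hav (i + 1) (by omega)⟩

/-- The structural conditions make `x` removable. -/
lemma removable_of_struct (hG : G.IsDAG) {x : V}
    (hC1 : ∀ a u, G.dir a x → G.dir x u → G.dir a u)
    (hC2 : ∀ a b, G.dir x a → G.dir x b → a ≠ b → G.dir a b ∨ G.dir b a)
    (hC3 : ∀ a b w, G.dir x a → G.dir x b → G.dir a b → G.dir w a → w ≠ x → G.dir w b) :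
    G.Removable x := by
  intro y z hy hz hyx hzx hyz Z hZ
  have hC1' : ∀ ⦃a b⦄, G.dir a x → G.dir x b → G.dir a b := fun a b h1 h2 => hC1 a b h1 h2
  have hwne : ∀ w ∈ Z ∪ ({y, z} : Set V), w ≠ x := by
    rintro w (hw | hw)
    · intro heq
      rw [heq] at hw
      exact (hZ hw).2 (Or.inl rfl)
    · rcases hw with hw | hw
      · rw [hw]; exact hyx
      · rw [Set.mem_singleton_iff.mp hw]; exact hzx
  constructor
  · -- easy direction
    intro hsep p'
    obtain ⟨i, h1, h2, hc⟩ := hsep (liftPath p')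
    refine ⟨i, h1, h2, ?_⟩
    rcases hc with ⟨hcol, hanc⟩ | ⟨hnc, hmem⟩
    · exact Or.inl ⟨hcol, fun w hw hancw => hanc w hw (anc_of_induce hancw)⟩
    · exact Or.inr ⟨hnc, hmem⟩
  · -- hard direction
    intro hsep' p
    by_contra hbl
    by_cases hx : ∃ k, k ≤ p.len ∧ p.vert k = x
    · obtain ⟨k, hk, hvk⟩ := hx
      have hZx : x ∉ Z := fun hin => (hZ hin).2 (Or.inl rfl)
      obtain ⟨W, hWopen, hWav⟩ := surgery hG hC1 hC2 hC3 hZx hyx hzx p hbl k hk hvk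
      have hav : ∀ i, i ≤ W.len → W.vert i ∈ G.verts \ {x} := by
        intro i hi
        exact ⟨W.mem i hi, by simpa using hWav i hi⟩
      set W' := injectWalk W hav with hW'
      have hlW : W'.len = W.len := rfl
      have hW'open : W'.IsOpen Z := by
        intro i h1 h2
        rw [hlW] at h2
        have hWo := hWopen i h1 h2
        constructor
        · intro hcol
          obtain ⟨w, hw, hanc⟩ := hWo.1 hcol
          exact ⟨w, hw, anc_induce hG (hwne w hw) hC1' hanc (hWav i (by omega))⟩
        · exact hWo.2
      obtain ⟨q, hq⟩ := MWalk.exists_path_of_open hyz W'.len W' rfl hW'open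
      exact hq (hsep' q)
    · push_neg at hx
      have hav : ∀ i, i ≤ p.len → p.vert i ∈ G.verts \ {x} := by
        intro i hi
        exact ⟨p.mem i hi, by simpa using hx i hi⟩
      obtain ⟨i, h1, h2, hc⟩ := hsep' (injectPath p hav)
      have hleni : (injectPath p hav).len = p.len := rfl
      rw [hleni] at h2
      refine hbl ⟨i, h1, h2, ?_⟩
      rcases hc with ⟨hcol, hanc⟩ | ⟨hnc, hmem⟩
      · refine Or.inl ⟨hcol, fun w hw hancw => hanc w hw ?_⟩
        exact anc_induce hG (hwne w hw) hC1' hancw (hx i (by omega))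
      · exact Or.inr ⟨hnc, hmem⟩

end S14

/-- In a DAG `G` with clique number at most `m`, a vertex `X` is
removable if for every `S ⊆ Mb(X)` with `|S| ≤ m − 2`: (1) no pair of distinct
`Y, Z ∈ Mb(X) ∖ S` is d-separated by `(Mb(X) ∪ {X}) ∖ ({Y, Z} ∪ S)`, and (2) no
`Y ∈ Mb(X) ∖ S` is d-separated from `X` by `Mb(X) ∖ ({Y} ∪ S)`. Moreover, the set of
vertices satisfying these conditions is non-empty. -/
theorem stmt_14 {V : Type*} [Fintype V] (G : MixedGraph V) (hG : G.IsDAG)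
    (hne : G.verts.Nonempty) (m : ℕ)
    (hclique : ∀ C : Set V, C ⊆ G.verts →
      (∀ a ∈ C, ∀ b ∈ C, a ≠ b → G.adj a b) → C.ncard ≤ m) :
    (∀ x ∈ G.verts,
      (∀ S ⊆ G.mb x, S.ncard ≤ m - 2 →
        (∀ y ∈ G.mb x \ S, ∀ z ∈ G.mb x \ S, y ≠ z →
          ¬ mSep G y z ((G.mb x ∪ {x}) \ ({y, z} ∪ S))) ∧
        (∀ y ∈ G.mb x \ S, ¬ mSep G x y (G.mb x \ ({y} ∪ S)))) →
      G.Removable x) ∧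
    (∃ x ∈ G.verts,
      ∀ S ⊆ G.mb x, S.ncard ≤ m - 2 →
        (∀ y ∈ G.mb x \ S, ∀ z ∈ G.mb x \ S, y ≠ z →
          ¬ mSep G y z ((G.mb x ∪ {x}) \ ({y, z} ∪ S))) ∧
        (∀ y ∈ G.mb x \ S, ¬ mSep G x y (G.mb x \ ({y} ∪ S)))) := by
  constructor
  · intro x hx hcond
    have hM := S14.machine hG m hclique hcond
    obtain ⟨hC1, hC2, hC3⟩ := S14.structC hG hM
    exact S14.removable_of_struct hG hC1 hC2 hC3
  · obtain ⟨x, hx, hsink⟩ := S14.exists_sink hG hne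
    exact ⟨x, hx, S14.sink_satisfies hG hx hsink m⟩
end

section
/- Let G be a DAG with clique number ω(G) ≤ m, let X be a vertex satisfying the two conditions of the RSL_ω removability test (for every S ⊆ Mb(X;G) with |S| ≤ m−2: (1) no pair of distinct Y,Z ∈ Mb(X;G)∖S is d-separated by (Mb(X;G)∪{X})∖({Y,Z}∪S), and (2) no Y ∈ Mb(X;G)∖S is d-separated from X by Mb(X;G)∖({Y}∪S)), and let Y ∈ Mb(X;G). Then Y ∈ CP(X;G) if and only if there exists S ⊆ Mb(X;G)∖{Y} with |S| = m−1 such that Mb(X;G)∖({Y}∪S) d-separates X and Y in G. Moreover, such a set S is unique and equals Ch(X;G) ∩ Ch(Y;G). -/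
namespace RSL

open MixedGraph

variable {V : Type*}

/-- Reverse an edge direction mark. -/
def edRev : EdgeDir → EdgeDir
  | .fwd => .bwd
  | .bwd => .fwd
  | .bidir => .bidir

lemma headAt2_edRev (e : EdgeDir) : headAt2 (edRev e) ↔ headAt1 e := by
  cases e <;> simp [edRev, headAt1, headAt2]

lemma headAt1_edRev (e : EdgeDir) : headAt1 (edRev e) ↔ headAt2 e := by
  cases e <;> simp [edRev, headAt1, headAt2]

section Basics

variable {G : MixedGraph V} (hG : G.IsDAG)

lemma anc_trans {a b c : V} (h1 : G.anc a b) (h2 : G.anc b c) : G.anc a c :=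
  Relation.ReflTransGen.trans h1 h2

lemma anc_refl {a : V} : G.anc a a := Relation.ReflTransGen.refl

lemma anc_of_dir {a b : V} (h : G.dir a b) : G.anc a b :=
  Relation.ReflTransGen.single h

include hG

lemma not_anc_of_dir {a b : V} (h : G.dir a b) : ¬ G.anc b a :=
  hG.1.no_dir_cycle a b h

lemma not_dir_self {a : V} : ¬ G.dir a a :=
  fun h => (hG.1.no_dir_cycle a a h) Relation.ReflTransGen.refl

lemma anc_antisymm {a b : V} (hab : G.anc a b) (hba : G.anc b a) : a = b := by
  rcases (Relation.ReflTransGen.cases_head hab) with h | ⟨c, hac, hcb⟩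
  · exact h
  · exact absurd (anc_trans hcb hba) (hG.1.no_dir_cycle _ _ hac)

lemma ne_of_dir {a b : V} (h : G.dir a b) : a ≠ b := by
  rintro rfl; exact not_dir_self hG h

end Basics

end RSL
namespace RSL

open MixedGraph

variable {V : Type*}

section Paths

variable {G : MixedGraph V}

/-- A single-edge path. -/
def mk1 {a b : V} (e : EdgeDir) (hv : edirValid G a b e) (hne : a ≠ b)
    (ha : a ∈ G.verts) (hb : b ∈ G.verts) : MPath G a b where
  len := 1
  len_pos := one_pos
  vert i := if i = 0 then a else b
  edir _ := e
  first := by simp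
  last := by simp
  mem i hi := by by_cases h : i = 0 <;> simp [h, ha, hb]
  inj i j hi hj h := by
    interval_cases i <;> interval_cases j <;> simp_all
  valid i hi := by
    interval_cases i; simpa using hv

lemma mk1_not_blocked {a b : V} (e : EdgeDir) (hv : edirValid G a b e) (hne : a ≠ b)
    (ha : a ∈ G.verts) (hb : b ∈ G.verts) (Z : Set V) :
    ¬ (mk1 e hv hne ha hb).blocked Z := by
  rintro ⟨i, h1, h2, -⟩
  simp only [mk1] at h2
  omega

lemma mSep_not_adj (hG : G.IsDAG) {a b : V} {Z : Set V} (hsep : mSep G a b Z) :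
    ¬ G.adj a b := by
  rintro (h | h | h)
  · have hne : a ≠ b := ne_of_dir hG h
    exact mk1_not_blocked .fwd h hne (G.dir_mem h).1 (G.dir_mem h).2 Z
      (hsep (mk1 .fwd h hne (G.dir_mem h).1 (G.dir_mem h).2))
  · have hne : a ≠ b := (ne_of_dir hG h).symm
    exact mk1_not_blocked .bwd h hne (G.dir_mem h).2 (G.dir_mem h).1 Z
      (hsep (mk1 .bwd h hne (G.dir_mem h).2 (G.dir_mem h).1))
  · exact hG.2 a b h

/-- The collider path `a → c ← b`. -/
def mk2 (hG : G.IsDAG) {a b c : V} (h1 : G.dir a c) (h2 : G.dir b c) (hab : a ≠ b) :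
    MPath G a b where
  len := 2
  len_pos := two_pos
  vert i := if i = 0 then a else if i = 1 then c else b
  edir i := if i = 0 then .fwd else .bwd
  first := by simp
  last := by simp
  mem i hi := by
    by_cases h : i = 0
    · simp [h, (G.dir_mem h1).1]
    · by_cases h' : i = 1 <;> simp [h, h', (G.dir_mem h1).2, (G.dir_mem h2).1]
  inj i j hi hj h := by
    have hac : a ≠ c := ne_of_dir hG h1
    have hbc : b ≠ c := ne_of_dir hG h2
    interval_cases i <;> interval_cases j <;> simp_all <;> omega
  valid i hi := by
    interval_cases i
    · simpa [edirValid] using h1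
    · simpa [edirValid] using h2

lemma mk2_collider (hG : G.IsDAG) {a b c : V} (h1 : G.dir a c) (h2 : G.dir b c)
    (hab : a ≠ b) : (mk2 hG h1 h2 hab).isColliderPath := by
  intro i hi1 hi2
  simp only [mk2] at hi2
  have : i = 1 := by omega
  subst this
  constructor <;> simp [mk2, MPath.collider, headAt1, headAt2]

lemma mk2_not_blocked (hG : G.IsDAG) {a b c : V} (h1 : G.dir a c) (h2 : G.dir b c)
    (hab : a ≠ b) {Z : Set V} (hc : c ∈ Z) : ¬ (mk2 hG h1 h2 hab).blocked Z := by
  rintro ⟨i, hi1, hi2, hcase⟩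
  simp only [mk2] at hi2
  have hi : i = 1 := by omega
  subst hi
  have hcol : (mk2 hG h1 h2 hab).collider 1 := mk2_collider hG h1 h2 hab 1 one_pos (by simp [mk2])
  rcases hcase with ⟨-, hall⟩ | ⟨hnc, -⟩
  · exact hall c (Or.inl hc) (by simp [mk2, anc_refl])
  · exact hnc hcol

lemma mSep_common_child (hG : G.IsDAG) {a b c : V} {Z : Set V} (hsep : mSep G a b Z)
    (hab : a ≠ b) (h1 : G.dir a c) (h2 : G.dir b c) : c ∉ Z :=
  fun hc => mk2_not_blocked hG h1 h2 hab hc (hsep (mk2 hG h1 h2 hab))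

/-- Characterization of the Markov boundary in a DAG. -/
lemma mem_mb_iff (hG : G.IsDAG) {x u : V} :
    u ∈ G.mb x ↔ u ≠ x ∧ (G.dir u x ∨ G.dir x u ∨ ∃ c, G.dir x c ∧ G.dir u c) := by
  constructor
  · rintro ⟨hne, p, hcp⟩
    refine ⟨hne, ?_⟩
    have hlp := p.len_pos
    rcases Nat.lt_or_ge p.len 3 with hlen | hlen
    · rcases Nat.lt_or_ge p.len 2 with hlen1 | hlen2
      · -- len = 1
        have h1 : p.len = 1 := by omega
        have hv := p.valid 0 (by omega)
        rw [p.first] at hv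
        have : p.vert 1 = x := by rw [← h1, p.last]
        rw [this] at hv
        cases h : p.edir 0 <;> rw [h] at hv
        · exact Or.inl hv
        · exact Or.inr (Or.inl hv)
        · exact absurd hv (hG.2 _ _)
      · -- len = 2
        have h2 : p.len = 2 := by omega
        have hcol := hcp 1 one_pos (by omega)
        obtain ⟨ha2, ha1⟩ := hcol
        have hv0 := p.valid 0 (by omega)
        have hv1 := p.valid 1 (by omega)
        rw [p.first] at hv0
        have hx2 : p.vert 2 = x := by rw [← h2, p.last]
        have he0 : p.edir 0 = .fwd := by
          rcases ha2 with h | h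
          · exact h
          · rw [h] at hv0; exact absurd hv0 (hG.2 _ _)
        have he1 : p.edir 1 = .bwd := by
          rcases ha1 with h | h
          · exact h
          · rw [h] at hv1; exact absurd hv1 (hG.2 _ _)
        rw [he0] at hv0
        rw [he1, hx2] at hv1
        exact Or.inr (Or.inr ⟨p.vert 1, hv1, hv0⟩)
    · -- len ≥ 3 : impossible
      exfalso
      have hc1 := hcp 1 one_pos (by omega)
      have hc2 := hcp 2 two_pos (by omega)
      obtain ⟨-, h11⟩ := hc1
      obtain ⟨h22, -⟩ := hc2
      simp only [show (2:ℕ) - 1 = 1 from rfl] at h22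
      have hv1 := p.valid 1 (by omega)
      rcases h11 with h | h <;> rcases h22 with h' | h' <;> rw [h] at h' hv1 <;>
        first
        | exact absurd hv1 (hG.2 _ _)
        | simp at h'
  · rintro ⟨hne, hu⟩
    rcases hu with h | h | ⟨c, hxc, huc⟩
    · refine ⟨hne, mk1 .fwd h hne (G.dir_mem h).1 (G.dir_mem h).2, ?_⟩
      intro i hi1 hi2
      simp only [mk1] at hi2
      omega
    · refine ⟨hne, mk1 .bwd h hne (G.dir_mem h).2 (G.dir_mem h).1, ?_⟩
      intro i hi1 hi2
      simp only [mk1] at hi2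
      omega
    · exact ⟨hne, mk2 hG huc hxc hne, mk2_collider hG huc hxc hne⟩

lemma mem_mb_of_dir₁ (hG : G.IsDAG) {x u : V} (h : G.dir u x) : u ∈ G.mb x :=
  (mem_mb_iff hG).2 ⟨ne_of_dir hG h, Or.inl h⟩

lemma mem_mb_of_dir₂ (hG : G.IsDAG) {x u : V} (h : G.dir x u) : u ∈ G.mb x :=
  (mem_mb_iff hG).2 ⟨(ne_of_dir hG h).symm, Or.inr (Or.inl h)⟩

lemma mem_mb_of_cc (hG : G.IsDAG) {x u c : V} (h1 : G.dir x c) (h2 : G.dir u c)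
    (hne : u ≠ x) : u ∈ G.mb x :=
  (mem_mb_iff hG).2 ⟨hne, Or.inr (Or.inr ⟨c, h1, h2⟩)⟩

end Paths

end RSL
namespace RSL

open MixedGraph

variable {V : Type*}

section Unblocked

variable {G : MixedGraph V} {a b : V} {Z : Set V}

/-- Extraction of openness conditions from a non-blocked path. -/
lemma unb {p : MPath G a b} (hnb : ¬ p.blocked Z) {i : ℕ} (h1 : 0 < i) (h2 : i < p.len) :
    (p.collider i → ∃ w ∈ Z ∪ ({a, b} : Set V), G.anc (p.vert i) w) ∧
    (¬ p.collider i → p.vert i ∉ Z) := by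
  constructor
  · intro hcol
    by_contra hno
    push_neg at hno
    exact hnb ⟨i, h1, h2, Or.inl ⟨hcol, hno⟩⟩
  · intro hncol hmem
    exact hnb ⟨i, h1, h2, Or.inr ⟨hncol, hmem⟩⟩

/-- If an edge of a non-blocked path points forward, its tail is an ancestor of
`Z ∪ {a, b}`. -/
lemma tail_anc (hG : G.IsDAG) {p : MPath G a b} (hnb : ¬ p.blocked Z) :
    ∀ i, i < p.len → p.edir i = .fwd → ∃ w ∈ Z ∪ ({a, b} : Set V), G.anc (p.vert i) w := by
  suffices h : ∀ k, ∀ i, p.len - i ≤ k → i < p.len → p.edir i = .fwd →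
      ∃ w ∈ Z ∪ ({a, b} : Set V), G.anc (p.vert i) w by
    exact fun i hi hf => h (p.len - i) i le_rfl hi hf
  intro k
  induction k with
  | zero => intro i h hi _; omega
  | succ k ih =>
    intro i hle hi hfwd
    have hd : G.dir (p.vert i) (p.vert (i + 1)) := by
      have hv := p.valid i hi
      rwa [hfwd] at hv
    by_cases hlast : i + 1 = p.len
    · refine ⟨b, by simp, ?_⟩
      have : p.vert (i + 1) = b := by rw [hlast, p.last]
      rw [this] at hd
      exact anc_of_dir hd
    · have hi1 : i + 1 < p.len := lt_of_le_of_ne (by omega) hlast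
      have hub := unb hnb (Nat.succ_pos i) hi1
      by_cases hcol : p.collider (i + 1)
      · obtain ⟨w, hw, hanc⟩ := hub.1 hcol
        exact ⟨w, hw, Relation.ReflTransGen.head hd hanc⟩
      · have h2 : headAt2 (p.edir (i + 1 - 1)) := by
          simp only [Nat.add_sub_cancel, hfwd]; exact Or.inl rfl
        have hn1 : ¬ headAt1 (p.edir (i + 1)) := fun h => hcol ⟨h2, h⟩
        have hf1 : p.edir (i + 1) = .fwd := by
          cases h : p.edir (i + 1)
          · rfl
          · exact absurd (Or.inl h) hn1
          · exact absurd (Or.inr h) hn1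
        obtain ⟨w, hw, hanc⟩ := ih (i + 1) (by omega) hi1 hf1
        exact ⟨w, hw, Relation.ReflTransGen.head hd hanc⟩

end Unblocked

section Reverse

variable {G : MixedGraph V} {a b : V}

/-- Reversal of a path. -/
def revPath (p : MPath G a b) : MPath G b a where
  len := p.len
  len_pos := p.len_pos
  vert i := p.vert (p.len - i)
  edir i := edRev (p.edir (p.len - 1 - i))
  first := by simp [p.last]
  last := by simp [p.first]
  mem i _ := p.mem _ (by omega)
  inj i j hi hj h := by
    have := p.inj _ _ (Nat.sub_le _ _) (Nat.sub_le _ _) h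
    omega
  valid i hi := by
    have hlp := p.len_pos
    have hv := p.valid (p.len - 1 - i) (by omega)
    have e1 : p.len - i = (p.len - 1 - i) + 1 := by omega
    have e2 : p.len - (i + 1) = p.len - 1 - i := by omega
    show edirValid G (p.vert (p.len - i)) (p.vert (p.len - (i + 1)))
      (edRev (p.edir (p.len - 1 - i)))
    rw [e1, e2]
    set j := p.len - 1 - i with hj
    cases h : p.edir j <;> rw [h] at hv
    · exact hv
    · exact hv
    · exact G.bi_symm hv

lemma rev_collider (p : MPath G a b) {i : ℕ} (h1 : 0 < i) (h2 : i < p.len) :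
    (revPath p).collider i ↔ p.collider (p.len - i) := by
  have hlp := p.len_pos
  unfold MPath.collider revPath
  simp only
  have e1 : p.len - 1 - (i - 1) = p.len - i := by omega
  have e2 : p.len - i - 1 = p.len - 1 - i := by omega
  rw [e1, e2, headAt2_edRev, headAt1_edRev]
  exact and_comm

lemma rev_blocked {p : MPath G a b} {Z : Set V} (h : (revPath p).blocked Z) : p.blocked Z := by
  obtain ⟨i, h1, h2, hcase⟩ := h
  have hlen : (revPath p).len = p.len := rfl
  rw [hlen] at h2
  refine ⟨p.len - i, by omega, by omega, ?_⟩
  have hv : (revPath p).vert i = p.vert (p.len - i) := rfl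
  have hcc := rev_collider p h1 h2
  have hset : Z ∪ ({b, a} : Set V) = Z ∪ ({a, b} : Set V) := by
    rw [Set.pair_comm]
  rcases hcase with ⟨hc, hall⟩ | ⟨hnc, hmem⟩
  · left
    refine ⟨hcc.mp hc, fun w hw => ?_⟩
    have := hall w (by rw [hset]; exact hw)
    rwa [hv] at this
  · right
    refine ⟨fun hc => hnc (hcc.mpr hc), ?_⟩
    rwa [hv] at hmem

lemma mSep_symm {Z : Set V} (h : mSep G a b Z) : mSep G b a Z :=
  fun q => rev_blocked (h (revPath q))

end Reverse

end RSL
namespace RSL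

open MixedGraph

variable {V : Type*}

/-- The endpoint-cut criterion for m-separation in a DAG. -/
lemma cut {G : MixedGraph V} (hG : G.IsDAG) {a b : V} {Z : Set V}
    (hab : a ≠ b) (hnadj : ¬ G.adj a b) (hbZ : b ∉ Z)
    (h1 : ∀ u, G.dir u a → (∃ w ∈ Z ∪ ({a, b} : Set V), G.anc u w) → u ∈ Z)
    (h2 : ∀ u, G.dir a u → (∃ w ∈ Z ∪ ({a, b} : Set V), G.anc u w) → u ∈ Z)
    (h3 : ∀ u, u ≠ a → u ≠ b →
      (∃ e, G.dir a e ∧ G.dir u e ∧ ∃ w ∈ Z ∪ ({a, b} : Set V), G.anc e w) → u ∈ Z)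
    (h4 : ∀ e, G.dir a e → G.dir b e → ¬ ∃ w ∈ Z ∪ ({a, b} : Set V), G.anc e w) :
    mSep G a b Z := by
  intro p
  by_contra hnb
  have hlp := p.len_pos
  have hv0 := p.valid 0 hlp
  rw [p.first] at hv0
  by_cases hl1 : p.len = 1
  · -- single edge: contradicts non-adjacency
    have hb1 : p.vert 1 = b := by rw [← hl1, p.last]
    rw [hb1] at hv0
    cases h0 : p.edir 0 <;> rw [h0] at hv0
    · exact hnadj (Or.inl hv0)
    · exact hnadj (Or.inr (Or.inl hv0))
    · exact hG.2 _ _ hv0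
  · have hlen2 : 2 ≤ p.len := by omega
    cases h0 : p.edir 0 <;> rw [h0] at hv0
    · -- a → v1
      by_cases hcol : p.collider 1
      · -- v1 is a collider
        obtain ⟨w, hw, hanc1⟩ := (unb hnb one_pos (by omega)).1 hcol
        have hv1 := p.valid 1 (by omega)
        cases h1e : p.edir 1 <;> rw [h1e] at hv1
        · -- collider needs an arrowhead at v1 from edge 1
          obtain ⟨-, hhd⟩ := hcol
          rw [h1e] at hhd
          rcases hhd with h | h <;> simp at h
        · -- v2 → v1
          have hd21 : G.dir (p.vert 2) (p.vert 1) := hv1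
          by_cases hl2 : p.len = 2
          · have hb2 : p.vert 2 = b := by rw [← hl2, p.last]
            rw [hb2] at hd21
            exact h4 (p.vert 1) hv0 hd21 ⟨w, hw, hanc1⟩
          · have h2lt : 2 < p.len := by omega
            have hne_a : p.vert 2 ≠ a := by
              intro h
              have := p.inj 2 0 (by omega) (by omega) (by rw [h, p.first])
              omega
            have hne_b : p.vert 2 ≠ b := by
              intro h
              have := p.inj 2 p.len (by omega) le_rfl (by rw [h, p.last])
              omega
            have hv2Z : p.vert 2 ∈ Z :=
              h3 (p.vert 2) hne_a hne_b
                ⟨p.vert 1, hv0, hd21, w, hw, hanc1⟩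
            have hnc2 : ¬ p.collider 2 := by
              rintro ⟨hhd, -⟩
              have : (2 : ℕ) - 1 = 1 := rfl
              rw [this, h1e] at hhd
              rcases hhd with h | h <;> simp at h
            exact (unb hnb two_pos h2lt).2 hnc2 hv2Z
        · exact hG.2 _ _ hv1
      · -- v1 is a non-collider
        have hnZ : p.vert 1 ∉ Z := (unb hnb one_pos (by omega)).2 hcol
        have hhd2 : headAt2 (p.edir 0) := by rw [h0]; exact Or.inl rfl
        have hn1 : ¬ headAt1 (p.edir 1) := by
          intro h
          exact hcol ⟨by simpa using hhd2, h⟩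
        have hf1 : p.edir 1 = .fwd := by
          cases h : p.edir 1
          · rfl
          · exact absurd (Or.inl h) hn1
          · exact absurd (Or.inr h) hn1
        obtain ⟨w, hw, hanc⟩ := tail_anc hG hnb 1 (by omega) hf1
        exact hnZ (h2 (p.vert 1) hv0 ⟨w, hw, hanc⟩)
    · -- v1 → a : v1 is a parent of a, necessarily a non-collider
      have hncol : ¬ p.collider 1 := by
        rintro ⟨hhd, -⟩
        have : (1 : ℕ) - 1 = 0 := rfl
        rw [this, h0] at hhd
        rcases hhd with h | h <;> simp at h
      have hnZ : p.vert 1 ∉ Z := (unb hnb one_pos (by omega)).2 hncol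
      exact hnZ (h1 (p.vert 1) hv0 ⟨a, Or.inr (Or.inl rfl), anc_of_dir hv0⟩)
    · exact hG.2 _ _ hv0

end RSL
namespace RSL

open MixedGraph

variable {V : Type*}

/-- Common children of `x` and `y`. -/
def S0 (G : MixedGraph V) (x y : V) : Set V := G.children x ∩ G.children y

/-- Elements of the Markov boundary of `x` that are descendants of common
children of `x` and `y` (other than `y`). -/
def TT (G : MixedGraph V) (x y : V) : Set V :=
  {v | v ∈ G.mb x ∧ v ≠ y ∧ ∃ c ∈ S0 G x y, G.anc c v}

/-- Bad configurations: descendant-type or non-adjacent-pair-type violations. -/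
def Bad (G : MixedGraph V) (x y : V) : Set V :=
  {v | (v ∈ TT G x y ∧ v ∉ S0 G x y) ∨
       (v ∈ S0 G x y ∧ ∃ s ∈ S0 G x y, s ≠ v ∧ ¬ G.adj s v ∧ ¬ G.anc v s)}

lemma mem_S0 {G : MixedGraph V} {x y c : V} : c ∈ S0 G x y ↔ G.dir x c ∧ G.dir y c :=
  Iff.rfl

section MainFacts

variable {G : MixedGraph V} (hG : G.IsDAG) {x y : V}

include hG

lemma not_adj_symm {a b : V} (h : ¬ G.adj a b) : ¬ G.adj b a := by
  rintro (h' | h' | h')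
  · exact h (Or.inr (Or.inl h'))
  · exact h (Or.inl h')
  · exact h (Or.inr (Or.inr (G.bi_symm h')))

lemma S0_sub_mb {c : V} (hc : c ∈ S0 G x y) : c ∈ G.mb x :=
  mem_mb_of_dir₂ hG hc.1

lemma S0_ne_y {c : V} (hc : c ∈ S0 G x y) : c ≠ y :=
  fun h => not_dir_self hG (h ▸ hc.2)

lemma S0_sub_TT {c : V} (hc : c ∈ S0 G x y) : c ∈ TT G x y :=
  ⟨S0_sub_mb hG hc, S0_ne_y hG hc, c, hc, anc_refl⟩

lemma TT_not_anc_x {v : V} (hv : v ∈ TT G x y) : ¬ G.anc v x := by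
  intro h
  obtain ⟨-, -, c, hcS, hcv⟩ := hv
  exact not_anc_of_dir hG hcS.1 (anc_trans hcv h)

lemma TT_not_anc_y {v : V} (hv : v ∈ TT G x y) : ¬ G.anc v y := by
  intro h
  obtain ⟨-, -, c, hcS, hcv⟩ := hv
  exact not_anc_of_dir hG hcS.2 (anc_trans hcv h)

lemma TT_closed {v w : V} (hv : v ∈ TT G x y) (hw : w ∈ G.mb x) (hanc : G.anc v w) :
    w ∈ TT G x y := by
  obtain ⟨-, -, c, hcS, hcv⟩ := hv
  refine ⟨hw, ?_, c, hcS, anc_trans hcv hanc⟩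
  rintro rfl
  exact not_anc_of_dir hG hcS.2 (anc_trans hcv hanc)

lemma TT_not_wit {v : V} (hv : v ∈ TT G x y) :
    ¬ ∃ w ∈ (G.mb x \ ({y} ∪ TT G x y)) ∪ ({x, y} : Set V), G.anc v w := by
  rintro ⟨w, hw, hanc⟩
  rcases hw with ⟨hwM, hwn⟩ | hw
  · exact hwn (Or.inr (TT_closed hG hv hwM hanc))
  · rcases hw with rfl | rfl
    · exact TT_not_anc_x hG hv hanc
    · exact TT_not_anc_y hG hv hanc

/-- Separation of `x` and `y` given `Mb(x) ∖ ({y} ∪ T)`. -/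
lemma sep_T (hy : y ∈ G.mb x) (hnadj : ¬ G.adj x y) :
    mSep G x y (G.mb x \ ({y} ∪ TT G x y)) := by
  have hyx : y ≠ x := hy.1
  refine cut hG hyx.symm hnadj (by simp) ?_ ?_ ?_ ?_
  · -- parents of x
    intro u hu hwit
    refine ⟨mem_mb_of_dir₁ hG hu, ?_⟩
    rintro (rfl | hT)
    · exact hnadj (Or.inr (Or.inl hu))
    · exact TT_not_wit hG hT hwit
  · -- children of x
    intro u hu hwit
    refine ⟨mem_mb_of_dir₂ hG hu, ?_⟩
    rintro (rfl | hT)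
    · exact hnadj (Or.inl hu)
    · exact TT_not_wit hG hT hwit
  · -- spouses of x
    rintro u hux huy ⟨e, hxe, hue, hwit⟩
    refine ⟨mem_mb_of_cc hG hxe hue hux, ?_⟩
    rintro (rfl | hT)
    · exact huy rfl
    · -- then e is also in TT, contradicting its witness
      obtain ⟨-, -, c, hcS, hcu⟩ := hT
      have heT : e ∈ TT G x y := by
        refine ⟨mem_mb_of_dir₂ hG hxe, ?_, c, hcS, anc_trans hcu (anc_of_dir hue)⟩
        rintro rfl
        exact hnadj (Or.inl hxe)
      exact TT_not_wit hG heT hwit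
  · -- common children of x and y
    intro e hxe hye
    exact TT_not_wit hG (S0_sub_TT hG ⟨hxe, hye⟩)

end MainFacts

section Rank

variable [Fintype V]

/-- Topological rank: number of ancestors. -/
noncomputable def rank (G : MixedGraph V) (v : V) : ℕ := {u | G.anc u v}.ncard

lemma rank_lt {G : MixedGraph V} (hG : G.IsDAG) {a b : V} (hab : G.anc a b)
    (hne : a ≠ b) : rank G a < rank G b := by
  apply Set.ncard_lt_ncard _ (Set.toFinite _)
  constructor
  · exact fun u hu => anc_trans hu hab
  · intro hsub
    exact hne (anc_antisymm hG hab (hsub anc_refl))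

end Rank

end RSL
namespace RSL

open MixedGraph

variable {V : Type*}

/-- Common children of `x` and `y` that are strict descendants of `z`. -/
def KK (G : MixedGraph V) (x y z : V) : Set V :=
  {k | k ∈ S0 G x y ∧ G.anc z k ∧ k ≠ z}

section KFacts

variable {G : MixedGraph V} (hG : G.IsDAG) {x y z : V}

include hG

lemma adj_flip {a b : V} (h : G.adj a b) : G.adj b a := by
  rcases h with h | h | h
  · exact Or.inr (Or.inl h)
  · exact Or.inl h
  · exact Or.inr (Or.inr (G.bi_symm h))

lemma Mdesc (hnb : ∀ v, G.anc z v → v ≠ z → v ∉ Bad G x y)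
    {c0 : V} (hc0 : c0 ∈ S0 G x y) (hc0z : G.anc c0 z) :
    ∀ w, w ∈ G.mb x → G.anc z w → w ≠ z → w ∈ KK G x y z := by
  intro w hwM hzw hwz
  have hwy : w ≠ y := by
    rintro rfl
    exact not_anc_of_dir hG hc0.2 (anc_trans hc0z hzw)
  have hwT : w ∈ TT G x y := ⟨hwM, hwy, c0, hc0, anc_trans hc0z hzw⟩
  by_cases hwS : w ∈ S0 G x y
  · exact ⟨hwS, hzw, hwz⟩
  · exact absurd (Or.inl ⟨hwT, hwS⟩ : w ∈ Bad G x y) (hnb w hzw hwz)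

lemma KK_card [Fintype V] {m : ℕ}
    (hclique : ∀ C : Set V, C ⊆ G.verts →
      (∀ a ∈ C, ∀ b ∈ C, a ≠ b → G.adj a b) → C.ncard ≤ m)
    (hx : x ∈ G.verts)
    (hnb : ∀ v, G.anc z v → v ≠ z → v ∉ Bad G x y)
    {a0 : V} (ha0 : a0 ∈ S0 G x y) (ha0K : a0 ∉ KK G x y z)
    (hna : ∀ k ∈ KK G x y z, ¬ G.anc k a0) :
    (KK G x y z).ncard ≤ m - 2 := by
  have hKadj : ∀ k ∈ KK G x y z, ∀ k' ∈ KK G x y z, k ≠ k' → G.adj k k' := by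
    intro k hk k' hk' hne
    by_contra hnadj
    by_cases hanc : G.anc k' k
    · have h1 : ¬ G.anc k k' := fun h => hne (anc_antisymm hG h hanc)
      exact (hnb k hk.2.1 hk.2.2) (Or.inr ⟨hk.1, k', hk'.1, hne.symm, not_adj_symm hG hnadj, h1⟩)
    · exact (hnb k' hk'.2.1 hk'.2.2) (Or.inr ⟨hk'.1, k, hk.1, hne, hnadj, hanc⟩)
  have hanchor : ∀ k ∈ KK G x y z, k ≠ a0 → G.adj a0 k := by
    intro k hk hka
    by_contra hnadj
    exact (hnb k hk.2.1 hk.2.2) (Or.inr ⟨hk.1, a0, ha0, Ne.symm hka, hnadj, hna k hk⟩)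
  have hxa0 : x ≠ a0 := ne_of_dir hG ha0.1
  have hxK : x ∉ insert a0 (KK G x y z) := by
    rintro (h | hK)
    · exact hxa0 h
    · exact not_dir_self hG hK.1.1
  have hsub : insert x (insert a0 (KK G x y z)) ⊆ G.verts := by
    rintro v (rfl | rfl | hv)
    · exact hx
    · exact (G.dir_mem ha0.1).2
    · exact (G.dir_mem hv.1.1).2
  have hadj : ∀ a ∈ insert x (insert a0 (KK G x y z)),
      ∀ b ∈ insert x (insert a0 (KK G x y z)), a ≠ b → G.adj a b := by
    rintro a (rfl | rfl | ha) b (rfl | rfl | hb) hne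
    · exact absurd rfl hne
    · exact Or.inl ha0.1
    · exact Or.inl hb.1.1
    · exact Or.inr (Or.inl ha0.1)
    · exact absurd rfl hne
    · exact hanchor b hb (Ne.symm hne)
    · exact Or.inr (Or.inl ha.1.1)
    · exact adj_flip hG (hanchor a ha hne)
    · exact hKadj a ha b hb hne
  have hcl := hclique _ hsub hadj
  rw [Set.ncard_insert_of_notMem hxK (Set.toFinite _),
    Set.ncard_insert_of_notMem ha0K (Set.toFinite _)] at hcl
  omega

end KFacts

end RSL
namespace RSL

open MixedGraph

variable {V : Type*}

lemma bad_empty [Fintype V] {G : MixedGraph V} (hG : G.IsDAG) {m : ℕ}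
    (hclique : ∀ C : Set V, C ⊆ G.verts →
      (∀ a ∈ C, ∀ b ∈ C, a ≠ b → G.adj a b) → C.ncard ≤ m)
    {x y : V} (hx : x ∈ G.verts)
    (hcond : ∀ S ⊆ G.mb x, S.ncard ≤ m - 2 →
      (∀ y' ∈ G.mb x \ S, ∀ z ∈ G.mb x \ S, y' ≠ z →
        ¬ mSep G y' z ((G.mb x ∪ {x}) \ ({y', z} ∪ S))) ∧
      (∀ y' ∈ G.mb x \ S, ¬ mSep G x y' (G.mb x \ ({y'} ∪ S))))
    (hy : y ∈ G.mb x) : Bad G x y = ∅ := by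
  by_contra hne
  obtain ⟨z, hzB, hzmax⟩ := Set.exists_max_image (Bad G x y) (rank G) (Set.toFinite _)
    (Set.nonempty_iff_ne_empty.2 hne)
  have hnb : ∀ v, G.anc z v → v ≠ z → v ∉ Bad G x y := by
    intro v hanc hvne hvB
    exact absurd (hzmax v hvB) (not_le.2 (rank_lt hG hanc (Ne.symm hvne)))
  have hKsub : KK G x y z ⊆ G.mb x := fun k hk => S0_sub_mb hG hk.1
  have hKz : z ∉ KK G x y z := fun h => h.2.2 rfl
  rcases hzB with ⟨hzT, hzS⟩ | ⟨hzS0, s, hsS0, hsne, hnadjsz, hnanczs⟩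
  · -- descendant-type violation
    obtain ⟨hzM, hzy, c0, hc0S, hc0z⟩ := hzT
    have hc0ne : c0 ≠ z := by rintro rfl; exact hzS hc0S
    have hKd := Mdesc hG hnb hc0S hc0z
    have ha0K : c0 ∉ KK G x y z := fun h => hc0ne (anc_antisymm hG hc0z h.2.1)
    have hna : ∀ k ∈ KK G x y z, ¬ G.anc k c0 := by
      intro k hk h
      exact hk.2.2 (anc_antisymm hG (anc_trans h hc0z) hk.2.1)
    have hcard : (KK G x y z).ncard ≤ m - 2 := KK_card hG hclique hx hnb hc0S ha0K hna
    by_cases hdxz : G.dir x z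
    · -- z is a child of x : separate y from z
      have hnanc_zy : ¬ G.anc z y := fun h => not_anc_of_dir hG hc0S.2 (anc_trans hc0z h)
      have hnadj_zy : ¬ G.adj z y := by
        rintro (h | h | h)
        · exact hnanc_zy (anc_of_dir h)
        · exact hzS ⟨hdxz, h⟩
        · exact hG.2 _ _ h
      have hwitkill : ∀ v, G.anc z v → v ≠ z →
          ¬ ∃ w ∈ ((G.mb x ∪ {x}) \ ({y, z} ∪ KK G x y z)) ∪ ({z, y} : Set V),
            G.anc v w := by
        rintro v hzv hvz ⟨w, hw, hvw⟩
        rcases hw with ⟨hwM, hwn⟩ | hw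
        · rcases hwM with hwM | hwx
          · have hwz : w ≠ z := fun h => hwn (Or.inl (Or.inr h))
            exact hwn (Or.inr (hKd w hwM (anc_trans hzv hvw) hwz))
          · have hwx' : w = x := hwx
            have hvx : v = x :=
              anc_antisymm hG (hwx' ▸ hvw) (Relation.ReflTransGen.head hdxz hzv)
            exact not_anc_of_dir hG hdxz (hvx ▸ hzv)
        · rcases hw with rfl | rfl
          · exact hvz (anc_antisymm hG hvw hzv)
          · exact hnanc_zy (anc_trans hzv hvw)
      have hsep : mSep G z y ((G.mb x ∪ {x}) \ ({y, z} ∪ KK G x y z)) := by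
        refine cut hG hzy hnadj_zy (fun h => h.2 (Or.inl (Or.inl rfl))) ?_ ?_ ?_ ?_
        · -- parents of z
          intro u hu _
          have huM : u ∈ G.mb x ∪ {x} := by
            by_cases hux : u = x
            · exact Or.inr hux
            · exact Or.inl (mem_mb_of_cc hG hdxz hu hux)
          refine ⟨huM, ?_⟩
          rintro (h | hK)
          · rcases h with rfl | rfl
            · exact hzS ⟨hdxz, hu⟩
            · exact not_dir_self hG hu
          · exact hK.2.2 (anc_antisymm hG (anc_of_dir hu) hK.2.1)
        · intro u hu hwit
          exact absurd hwit (hwitkill u (anc_of_dir hu) (Ne.symm (ne_of_dir hG hu)))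
        · rintro u - - ⟨e, hze, hue, hwit⟩
          exact absurd hwit (hwitkill e (anc_of_dir hze) (Ne.symm (ne_of_dir hG hze)))
        · intro e hze hye
          exact hwitkill e (anc_of_dir hze) (Ne.symm (ne_of_dir hG hze))
      have hsep' := mSep_symm hsep
      have hyK : y ∉ KK G x y z := fun h => not_dir_self hG h.1.2
      exact (hcond _ hKsub hcard).1 y ⟨hy, hyK⟩ z ⟨hzM, hKz⟩ (Ne.symm hzy) hsep'
    · -- z is a coparent-type vertex : separate x from z
      have hancxz : G.anc x z := Relation.ReflTransGen.head hc0S.1 hc0z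
      have hnadjxz : ¬ G.adj x z := by
        rintro (h | h | h)
        · exact hdxz h
        · exact not_anc_of_dir hG h hancxz
        · exact hG.2 _ _ h
      have hzx : z ≠ x := hzM.1
      have hwitkill : ∀ v, G.anc z v → v ≠ z →
          ¬ ∃ w ∈ (G.mb x \ ({z} ∪ KK G x y z)) ∪ ({x, z} : Set V), G.anc v w := by
        rintro v hzv hvz ⟨w, hw, hvw⟩
        rcases hw with ⟨hwM, hwn⟩ | hw
        · have hwz : w ≠ z := fun h => hwn (Or.inl h)
          exact hwn (Or.inr (hKd w hwM (anc_trans hzv hvw) hwz))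
        · rcases hw with hwx1 | hwz1
          · have hwx' : w = x := hwx1
            have hvx : v = x := anc_antisymm hG (hwx' ▸ hvw) (anc_trans hancxz hzv)
            exact hzx (anc_antisymm hG (hvx ▸ hzv) hancxz)
          · have hwz' : w = z := hwz1
            exact hvz (anc_antisymm hG (hwz' ▸ hvw) hzv)
      have hsep : mSep G x z (G.mb x \ ({z} ∪ KK G x y z)) := by
        refine cut hG (Ne.symm hzx) hnadjxz (fun h => h.2 (Or.inl rfl)) ?_ ?_ ?_ ?_
        · intro u hu _
          refine ⟨mem_mb_of_dir₁ hG hu, ?_⟩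
          rintro (rfl | hK)
          · exact not_anc_of_dir hG hu hancxz
          · exact not_anc_of_dir hG hK.1.1 (anc_of_dir hu)
        · intro u hu hwit
          refine ⟨mem_mb_of_dir₂ hG hu, ?_⟩
          rintro (rfl | hK)
          · exact hdxz hu
          · exact hwitkill u hK.2.1 hK.2.2 hwit
        · rintro u hux huz ⟨e, hxe, hue, hwit⟩
          refine ⟨mem_mb_of_cc hG hxe hue hux, ?_⟩
          rintro (rfl | hK)
          · exact huz rfl
          · have heze : G.anc z e := anc_trans hK.2.1 (anc_of_dir hue)
            have hez : e ≠ z := fun h => hdxz (h ▸ hxe)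
            exact hwitkill e heze hez hwit
        · intro e hxe hze
          exact hwitkill e (anc_of_dir hze) (Ne.symm (ne_of_dir hG hze))
      exact (hcond _ hKsub hcard).2 z ⟨hzM, hKz⟩ hsep
  · -- pair-type violation
    have hzM : z ∈ G.mb x := S0_sub_mb hG hzS0
    have hKd := Mdesc hG hnb hzS0 anc_refl
    have hna : ∀ k ∈ KK G x y z, ¬ G.anc k s := fun k hk h => hnanczs (anc_trans hk.2.1 h)
    have hsK : s ∉ KK G x y z := fun h => hnanczs h.2.1
    have hcard : (KK G x y z).ncard ≤ m - 2 := KK_card hG hclique hx hnb hsS0 hsK hna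
    have hnadj_zs : ¬ G.adj z s := not_adj_symm hG hnadjsz
    have hwitkill : ∀ v, G.anc z v → v ≠ z →
        ¬ ∃ w ∈ ((G.mb x ∪ {x}) \ ({s, z} ∪ KK G x y z)) ∪ ({z, s} : Set V),
          G.anc v w := by
      rintro v hzv hvz ⟨w, hw, hvw⟩
      rcases hw with ⟨hwM, hwn⟩ | hw
      · rcases hwM with hwM | hwx
        · have hwz : w ≠ z := fun h => hwn (Or.inl (Or.inr h))
          exact hwn (Or.inr (hKd w hwM (anc_trans hzv hvw) hwz))
        · have hwx' : w = x := hwx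
          have hvx : v = x :=
            anc_antisymm hG (hwx' ▸ hvw) (Relation.ReflTransGen.head hzS0.1 hzv)
          exact not_anc_of_dir hG hzS0.1 (hvx ▸ hzv)
      · rcases hw with rfl | rfl
        · exact hvz (anc_antisymm hG hvw hzv)
        · exact hnanczs (anc_trans hzv hvw)
    have hsep : mSep G z s ((G.mb x ∪ {x}) \ ({s, z} ∪ KK G x y z)) := by
      refine cut hG (Ne.symm hsne) hnadj_zs (fun h => h.2 (Or.inl (Or.inl rfl))) ?_ ?_ ?_ ?_
      · intro u hu _
        have huM : u ∈ G.mb x ∪ {x} := by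
          by_cases hux : u = x
          · exact Or.inr hux
          · exact Or.inl (mem_mb_of_cc hG hzS0.1 hu hux)
        refine ⟨huM, ?_⟩
        rintro (h | hK)
        · rcases h with rfl | rfl
          · exact hnadjsz (Or.inl hu)
          · exact not_dir_self hG hu
        · exact hK.2.2 (anc_antisymm hG (anc_of_dir hu) hK.2.1)
      · intro u hu hwit
        exact absurd hwit (hwitkill u (anc_of_dir hu) (Ne.symm (ne_of_dir hG hu)))
      · rintro u - - ⟨e, hze, hue, hwit⟩
        exact absurd hwit (hwitkill e (anc_of_dir hze) (Ne.symm (ne_of_dir hG hze)))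
      · intro e hze hse
        exact hwitkill e (anc_of_dir hze) (Ne.symm (ne_of_dir hG hze))
    have hsep' := mSep_symm hsep
    exact (hcond _ hKsub hcard).1 s ⟨S0_sub_mb hG hsS0, hsK⟩ z ⟨hzM, hKz⟩ hsne hsep'

end RSL
namespace RSL

open MixedGraph

variable {V : Type*}

lemma main_aux [Fintype V] {G : MixedGraph V} (hG : G.IsDAG) {m : ℕ}
    (hclique : ∀ C : Set V, C ⊆ G.verts →
      (∀ a ∈ C, ∀ b ∈ C, a ≠ b → G.adj a b) → C.ncard ≤ m)
    {x y : V} (hx : x ∈ G.verts)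
    (hcond : ∀ S ⊆ G.mb x, S.ncard ≤ m - 2 →
      (∀ y' ∈ G.mb x \ S, ∀ z ∈ G.mb x \ S, y' ≠ z →
        ¬ mSep G y' z ((G.mb x ∪ {x}) \ ({y', z} ∪ S))) ∧
      (∀ y' ∈ G.mb x \ S, ¬ mSep G x y' (G.mb x \ ({y'} ∪ S))))
    (hy : y ∈ G.mb x) (hnadj : ¬ G.adj x y) :
    (G.children x ∩ G.children y).ncard = m - 1 ∧
    mSep G x y (G.mb x \ ({y} ∪ (G.children x ∩ G.children y))) := by
  have hbad := bad_empty hG hclique hx hcond hy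
  have hTS0 : TT G x y = S0 G x y := by
    apply Set.Subset.antisymm
    · intro v hv
      by_contra hvS
      have hvB : v ∈ Bad G x y := Or.inl ⟨hv, hvS⟩
      rw [hbad] at hvB
      exact hvB
    · exact fun v hv => S0_sub_TT hG hv
  have hS0adj : ∀ s ∈ S0 G x y, ∀ t ∈ S0 G x y, s ≠ t → G.adj s t := by
    intro s hs t ht hne
    by_contra hnadj'
    by_cases hanc : G.anc t s
    · have h1 : ¬ G.anc s t := fun h => hne (anc_antisymm hG h hanc)
      have hB : s ∈ Bad G x y := Or.inr ⟨hs, t, ht, hne.symm, not_adj_symm hG hnadj', h1⟩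
      rw [hbad] at hB
      exact hB
    · have hB : t ∈ Bad G x y := Or.inr ⟨ht, s, hs, hne, hnadj', hanc⟩
      rw [hbad] at hB
      exact hB
  have hxS0 : x ∉ S0 G x y := fun h => not_dir_self hG h.1
  have hsub : insert x (S0 G x y) ⊆ G.verts := by
    rintro v (rfl | hv)
    · exact hx
    · exact (G.dir_mem hv.1).2
  have hadj : ∀ a ∈ insert x (S0 G x y), ∀ b ∈ insert x (S0 G x y), a ≠ b → G.adj a b := by
    rintro a (rfl | ha) b (rfl | hb) hne
    · exact absurd rfl hne
    · exact Or.inl hb.1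
    · exact Or.inr (Or.inl ha.1)
    · exact hS0adj a ha b hb hne
  have hcl := hclique _ hsub hadj
  rw [Set.ncard_insert_of_notMem hxS0 (Set.toFinite _)] at hcl
  have hTlow : ¬ (TT G x y).ncard ≤ m - 2 := by
    intro hc
    have hTsub : TT G x y ⊆ G.mb x := fun v hv => hv.1
    have hyT : y ∉ TT G x y := fun h => h.2.1 rfl
    exact (hcond _ hTsub hc).2 y ⟨hy, hyT⟩ (sep_T hG hy hnadj)
  rw [hTS0] at hTlow
  have hsep := sep_T hG hy hnadj
  rw [hTS0] at hsep
  have hS0eq : S0 G x y = G.children x ∩ G.children y := rfl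
  rw [← hS0eq]
  exact ⟨by omega, hsep⟩

end RSL

/-- In a DAG `G` with clique number at most `m`, if `X` satisfies the
two conditions of the RSL_ω removability test and `Y ∈ Mb(X)`, then `Y ∈ CP(X)` iff
there is `S ⊆ Mb(X) ∖ {Y}` with `|S| = m − 1` such that `Mb(X) ∖ ({Y} ∪ S)`
d-separates `X` and `Y`; moreover such an `S` is unique and equals
`Ch(X) ∩ Ch(Y)`. -/
theorem stmt_15 {V : Type*} [Fintype V] (G : MixedGraph V) (hG : G.IsDAG)
    (m : ℕ)
    (hclique : ∀ C : Set V, C ⊆ G.verts →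
      (∀ a ∈ C, ∀ b ∈ C, a ≠ b → G.adj a b) → C.ncard ≤ m)
    (x : V) (hx : x ∈ G.verts)
    (hcond : ∀ S ⊆ G.mb x, S.ncard ≤ m - 2 →
      (∀ y ∈ G.mb x \ S, ∀ z ∈ G.mb x \ S, y ≠ z →
        ¬ mSep G y z ((G.mb x ∪ {x}) \ ({y, z} ∪ S))) ∧
      (∀ y ∈ G.mb x \ S, ¬ mSep G x y (G.mb x \ ({y} ∪ S))))
    (y : V) (hy : y ∈ G.mb x) :
    (y ∈ G.coparents x ↔
      ∃ S ⊆ G.mb x \ {y}, S.ncard = m - 1 ∧ mSep G x y (G.mb x \ ({y} ∪ S))) ∧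
    (∀ S ⊆ G.mb x \ {y}, S.ncard = m - 1 → mSep G x y (G.mb x \ ({y} ∪ S)) →
      S = G.children x ∩ G.children y) := by
  have hyx : y ≠ x := hy.1
  constructor
  · constructor
    · rintro ⟨hne, hnadj, c, hxc, hyc⟩
      obtain ⟨hcard, hsep⟩ := RSL.main_aux hG hclique hx hcond hy hnadj
      refine ⟨G.children x ∩ G.children y, ?_, hcard, hsep⟩
      rintro v ⟨h1, h2⟩
      exact ⟨RSL.mem_mb_of_dir₂ hG h1, fun h => RSL.not_dir_self hG (by
        have hv : v = y := h
        rw [hv] at h2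
        exact h2)⟩
    · rintro ⟨S, hS, hcard, hsep⟩
      have hnadj : ¬ G.adj x y := RSL.mSep_not_adj hG hsep
      refine ⟨hyx, hnadj, ?_⟩
      rcases (RSL.mem_mb_iff hG).1 hy with ⟨-, h | h | ⟨c, h1, h2⟩⟩
      · exact absurd (Or.inr (Or.inl h)) hnadj
      · exact absurd (Or.inl h) hnadj
      · exact ⟨c, h1, h2⟩
  · intro S hS hcard hsep
    have hnadj : ¬ G.adj x y := RSL.mSep_not_adj hG hsep
    obtain ⟨hcard0, -⟩ := RSL.main_aux hG hclique hx hcond hy hnadj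
    have hsub : G.children x ∩ G.children y ⊆ S := by
      intro c hc
      by_contra hcS
      have hcy : c ≠ y := fun h => RSL.not_dir_self hG (by
        rw [h] at hc
        exact hc.2)
      have hcZ : c ∈ G.mb x \ ({y} ∪ S) := by
        refine ⟨RSL.mem_mb_of_dir₂ hG hc.1, ?_⟩
        rintro (h | h)
        · exact hcy h
        · exact hcS h
      exact RSL.mSep_common_child hG hsep hyx.symm hc.1 hc.2 hcZ
    exact (Set.eq_of_subset_of_ncard_le hsub (by rw [hcard, hcard0]) (Set.toFinite _)).symm
end
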